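/- arXiv:1003.6107 — 7 statements merged into one kernel-verified Lean document; each statement's English description precedes it below -/
import Mathlib

section
/- Let d ≥ 0 and 1 ≤ k ≤ d+1 be integers. The ℂ-subspace of V_d consisting of those triples (a₀,a₁,a₂) for which both dehomogenizations a₀(x,y,1) and a₁(x,y,1) vanish to order at least k at the origin (equivalently, for which the corresponding foliation has a singularity of order ≥ k at the point p = [0:0:1]) has dimension (d² + 4d + 3) − k(k+1). (This is the fiber of the bundle M_k; it yields that the locus M_k of foliations with a singularity of order ≥ k has codimension k(k+1) − 2 in P^N.) -/
open MvPolynomial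

/-- The linear "Euler" map sending a triple `(a₀,a₁,a₂)` of polynomials to
`a₀z₀ + a₁z₁ + a₂z₂`. -/
noncomputable def eulerMap :
    (Fin 3 → MvPolynomial (Fin 3) ℂ) →ₗ[ℂ] MvPolynomial (Fin 3) ℂ :=
  ∑ i : Fin 3, (LinearMap.mulRight ℂ (X i : MvPolynomial (Fin 3) ℂ)).comp (LinearMap.proj i)

/-- The space `V_d` of triples `(a₀,a₁,a₂)` of homogeneous polynomials of
degree `d+1` in `ℂ[z₀,z₁,z₂]` satisfying `a₀z₀ + a₁z₁ + a₂z₂ = 0`. -/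
noncomputable def foliationSpace (d : ℕ) : Submodule ℂ (Fin 3 → MvPolynomial (Fin 3) ℂ) :=
  (⨅ i : Fin 3, Submodule.comap (LinearMap.proj i)
      (homogeneousSubmodule (Fin 3) ℂ (d + 1))) ⊓ LinearMap.ker eulerMap

/-- Dehomogenization `p(z₀,z₁,z₂) ↦ p(x,y,1)` as a linear map. -/
noncomputable def dehom : MvPolynomial (Fin 3) ℂ →ₗ[ℂ] MvPolynomial (Fin 2) ℂ :=
  (aeval ![X 0, X 1, 1] : MvPolynomial (Fin 3) ℂ →ₐ[ℂ] MvPolynomial (Fin 2) ℂ).toLinearMap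

/-- The subspace of polynomials in `ℂ[x,y]` vanishing to order `≥ k`
at the origin: all homogeneous components of degree `< k` vanish. -/
noncomputable def vanishToOrder (k : ℕ) : Submodule ℂ (MvPolynomial (Fin 2) ℂ) :=
  ⨅ n ∈ Finset.range k, LinearMap.ker (homogeneousComponent n :
    MvPolynomial (Fin 2) ℂ →ₗ[ℂ] MvPolynomial (Fin 2) ℂ)

/-- The fiber of `M_k`: triples in `V_d` whose dehomogenized coefficients
`a₀(x,y,1)`, `a₁(x,y,1)` vanish to order `≥ k` at the origin. -/
noncomputable def MkFiber (d k : ℕ) : Submodule ℂ (Fin 3 → MvPolynomial (Fin 3) ℂ) :=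
  foliationSpace d
    ⊓ Submodule.comap (dehom.comp (LinearMap.proj 0)) (vanishToOrder k)
    ⊓ Submodule.comap (dehom.comp (LinearMap.proj 1)) (vanishToOrder k)

/-!
A form vanishes to order `≥ k` at `[0:0:1]` iff it only involves monomials `z^e` with
`e₀ + e₁ ≥ k`. Hence the fiber is the kernel of the Euler map `a ↦ a₀z₀ + a₁z₁ + a₂z₂` on the
space of triples of forms of degree `d + 1` whose first two entries involve only such monomials.
For `k ≤ d + 1` the Euler map is onto the forms of degree `d + 2`, since every monomial of degree
`d + 2` is `zᵢ` times an admissible monomial in the `i`-th entry. Rank–nullity and counting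
monomials give `((d+2)(d+3) - k(k+1)) + (d+2)(d+3)/2 - (d+3)(d+4)/2 = (d+1)(d+3) - k(k+1)`.
-/

open Finset
open Module (finrank)

namespace Submodule

variable {R ι : Type*} [Ring R] {φ : ι → Type*} [∀ i, AddCommGroup (φ i)] [∀ i, Module R (φ i)]

def piUnivEquiv (p : ∀ i, Submodule R (φ i)) : pi Set.univ p ≃ₗ[R] ∀ i, p i where
  toFun x i := ⟨x.1 i, x.2 i trivial⟩
  invFun y := ⟨fun i => y i, fun i _ => (y i).2⟩
  map_add' _ _ := rfl
  map_smul' _ _ := rfl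
  left_inv _ := rfl
  right_inv _ := rfl

instance [Finite ι] (p : ∀ i, Submodule R (φ i)) [∀ i, Module.Finite R (p i)] :
    Module.Finite R (pi Set.univ p) :=
  Module.Finite.equiv (piUnivEquiv p).symm

lemma finrank_pi_univ [StrongRankCondition R] [Fintype ι] (p : ∀ i, Submodule R (φ i))
    [∀ i, Module.Free R (p i)] [∀ i, Module.Finite R (p i)] :
    finrank R (pi Set.univ p) = ∑ i, finrank R (p i) := by
  rw [(piUnivEquiv p).finrank_eq, Module.finrank_pi_fintype]

end Submodule

lemma Submodule.finrank_inf_ker_add_finrank_map {K V W : Type*} [DivisionRing K]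
    [AddCommGroup V] [Module K V] [AddCommGroup W] [Module K W] (S : Submodule K V)
    [FiniteDimensional K S] (f : V →ₗ[K] W) :
    finrank K ↥(S ⊓ LinearMap.ker f) + finrank K ↥(S.map f) = finrank K S := by
  have := LinearMap.finrank_range_add_finrank_ker (f ∘ₗ S.subtype)
  rwa [LinearMap.range_comp, range_subtype, LinearMap.ker_comp, ← finrank_map_subtype_eq,
    map_comap_subtype, add_comm] at this

lemma two_mul_sum_Ico_succ {k N : ℕ} (h : k ≤ N) :
    2 * ∑ m ∈ Ico k N, (m + 1) = N * (N + 1) - k * (k + 1) := by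
  induction N, h using Nat.le_induction with
  | base => simp
  | succ N hkN ih =>
    rw [sum_Ico_succ_top hkN, mul_add, ih]
    zify [Nat.mul_le_mul hkN (by omega : k + 1 ≤ N + 1),
      Nat.mul_le_mul hkN.step (by omega : k + 1 ≤ N + 1 + 1)]
    ring

lemma Finsupp.degree_fin_three (e : Fin 3 →₀ ℕ) : e.degree = e 0 + e 1 + e 2 := by
  rw [degree_eq_sum, Fin.sum_univ_three]

lemma MvPolynomial.IsHomogeneous.degree_of_mem_support {σ R : Type*} [CommSemiring R]
    {p : MvPolynomial σ R} {n : ℕ} (hp : p.IsHomogeneous n) {e : σ →₀ ℕ} (he : e ∈ p.support) :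
    e.degree = n :=
  (hp.degree_eq_sum_deg_support he).symm

lemma MvPolynomial.monomial_eq_monomial_sub_single_mul_X {σ R : Type*} [CommSemiring R]
    {e : σ →₀ ℕ} {i : σ} (h : e i ≠ 0) (r : R) :
    monomial e r = monomial (e - Finsupp.single i 1) r * X i := by
  rw [X, monomial_mul, mul_one, tsub_add_cancel_of_le (Finsupp.single_le_iff.mpr (by omega))]

noncomputable def vanishingExponents (n k : ℕ) : Finset (Fin 3 →₀ ℕ) :=
  ((Ico k (n + 1)).sigma antidiagonal).image fun p =>
    Finsupp.single 0 p.2.1 + Finsupp.single 1 p.2.2 + Finsupp.single 2 (n - p.1)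

lemma mem_vanishingExponents {n k : ℕ} {e : Fin 3 →₀ ℕ} :
    e ∈ vanishingExponents n k ↔ e.degree = n ∧ k ≤ e 0 + e 1 := by
  rw [Finsupp.degree_fin_three]
  constructor
  · intro he
    obtain ⟨⟨m, i, j⟩, hp, rfl⟩ := mem_image.mp he
    simp only [mem_sigma, mem_Ico, HasAntidiagonal.mem_antidiagonal] at hp
    simp only [Finsupp.coe_add, Pi.add_apply, Finsupp.single_apply, Fin.reduceEq,
      ↓reduceIte, add_zero, zero_add]
    omega
  · rintro ⟨hn, hk⟩
    refine mem_image.mpr ⟨⟨e 0 + e 1, e 0, e 1⟩,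
      mem_sigma.mpr ⟨mem_Ico.mpr ⟨hk, show e 0 + e 1 < n + 1 by omega⟩,
        HasAntidiagonal.mem_antidiagonal.mpr rfl⟩, ?_⟩
    rw [show n - (e 0 + e 1) = e 2 by omega, ← Fin.sum_univ_three fun i => Finsupp.single i (e i),
      Finsupp.univ_sum_single]

lemma two_mul_card_vanishingExponents {n k : ℕ} (hk : k ≤ n + 1) :
    2 * #(vanishingExponents n k) = (n + 1) * (n + 2) - k * (k + 1) := by
  rw [vanishingExponents, card_image_of_injOn, card_sigma]
  · simp_rw [Nat.card_antidiagonal]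
    exact two_mul_sum_Ico_succ hk
  · rintro ⟨m, i, j⟩ hp ⟨m', i', j'⟩ hp' h
    simp only [coe_sigma, Set.mem_sigma_iff, coe_Ico, Set.mem_Ico, mem_coe,
      HasAntidiagonal.mem_antidiagonal] at hp hp'
    have h0 := congr($h 0)
    have h1 := congr($h 1)
    simp only [Finsupp.coe_add, Pi.add_apply, Finsupp.single_apply, Fin.reduceEq,
      ↓reduceIte, add_zero, zero_add] at h0 h1
    subst h0 h1
    obtain rfl : m = m' := by omega
    rfl

lemma two_mul_card_vanishingExponents_zero (n : ℕ) :
    2 * #(vanishingExponents n 0) = (n + 1) * (n + 2) :=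
  two_mul_card_vanishingExponents (Nat.zero_le _)

noncomputable def dehomExponent (e : Fin 3 →₀ ℕ) : Fin 2 →₀ ℕ :=
  Finsupp.single 0 (e 0) + Finsupp.single 1 (e 1)

lemma degree_dehomExponent (e : Fin 3 →₀ ℕ) : (dehomExponent e).degree = e 0 + e 1 := by
  simp [dehomExponent, Finsupp.degree_eq_sum]

lemma dehom_monomial (e : Fin 3 →₀ ℕ) (r : ℂ) :
    dehom (monomial e r) = monomial (dehomExponent e) r := by
  rw [dehom, AlgHom.toLinearMap_apply, aeval_monomial, Finsupp.prod_fintype _ _ (by simp),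
    Fin.prod_univ_three, dehomExponent, monomial_add_single, ← C_mul_X_pow_eq_monomial]
  simp [mul_assoc]

lemma dehom_eq_sum (p : MvPolynomial (Fin 3) ℂ) :
    dehom p = ∑ e ∈ p.support, monomial (dehomExponent e) (coeff e p) := by
  conv_lhs => rw [p.as_sum]
  simp only [map_sum, dehom_monomial]

lemma injOn_dehomExponent {p : MvPolynomial (Fin 3) ℂ} {n : ℕ} (hp : p.IsHomogeneous n) :
    Set.InjOn dehomExponent p.support := by
  intro e he f hf hef
  have hed := hp.degree_of_mem_support he
  have hfd := hp.degree_of_mem_support hf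
  rw [Finsupp.degree_fin_three] at hed hfd
  have h0 := congr($hef 0)
  have h1 := congr($hef 1)
  simp only [dehomExponent, Fin.isValue, Finsupp.coe_add, Pi.add_apply,
    Finsupp.single_apply, Fin.reduceEq, ↓reduceIte, add_zero, zero_add] at h0 h1
  ext i
  fin_cases i
  exacts [h0, h1, show e 2 = f 2 by omega]

lemma coeff_dehom {p : MvPolynomial (Fin 3) ℂ} {n : ℕ} (hp : p.IsHomogeneous n)
    {e : Fin 3 →₀ ℕ} (he : e ∈ p.support) : coeff (dehomExponent e) (dehom p) = coeff e p := by
  rw [dehom_eq_sum, coeff_sum, sum_eq_single_of_mem e he fun f hf hfe => ?_, coeff_monomial,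
    if_pos rfl]
  rw [coeff_monomial, if_neg fun h => hfe (injOn_dehomExponent hp hf he h)]

lemma support_dehom {p : MvPolynomial (Fin 3) ℂ} {n : ℕ} (hp : p.IsHomogeneous n) :
    (dehom p).support = p.support.image dehomExponent := by
  classical
  refine Subset.antisymm (fun f hf => ?_) (image_subset_iff.mpr fun e he => ?_)
  · rw [dehom_eq_sum] at hf
    obtain ⟨e, he, hf⟩ := mem_biUnion.mp (support_sum hf)
    exact mem_image.mpr ⟨e, he, (mem_singleton.mp (support_monomial_subset hf)).symm⟩
  · rw [mem_support_iff, coeff_dehom hp he]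
    exact mem_support_iff.mp he

lemma mem_vanishToOrder_iff {k : ℕ} {q : MvPolynomial (Fin 2) ℂ} :
    q ∈ vanishToOrder k ↔ ∀ f ∈ q.support, k ≤ f.degree := by
  simp only [vanishToOrder, Submodule.mem_iInf, mem_range, LinearMap.mem_ker]
  constructor
  · intro h f hf
    by_contra! hlt
    have := congr(coeff f $(h _ hlt))
    rw [coeff_homogeneousComponent, if_pos rfl, coeff_zero] at this
    exact mem_support_iff.mp hf this
  · intro h n hn
    exact homogeneousComponent_eq_zero' n q fun f hf hfn => by have := h f hf; omega

lemma dehom_mem_vanishToOrder_iff {p : MvPolynomial (Fin 3) ℂ} {n k : ℕ}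
    (hp : p.IsHomogeneous n) : dehom p ∈ vanishToOrder k ↔ ∀ e ∈ p.support, k ≤ e 0 + e 1 := by
  simp [mem_vanishToOrder_iff, support_dehom hp, degree_dehomExponent]

lemma vanishToOrder_zero : vanishToOrder 0 = ⊤ := by
  simp [vanishToOrder]

noncomputable def vanishingForms (n k : ℕ) : Submodule ℂ (MvPolynomial (Fin 3) ℂ) :=
  restrictSupport ℂ ↑(vanishingExponents n k)

instance (n k : ℕ) : Module.Finite ℂ (vanishingForms n k) :=
  Module.Finite.of_basis (basisRestrictSupport ℂ _)

lemma finrank_vanishingForms (n k : ℕ) :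
    finrank ℂ (vanishingForms n k) = #(vanishingExponents n k) := by
  rw [vanishingForms, Module.finrank_eq_card_basis (basisRestrictSupport ℂ _)]
  simp

lemma vanishingForms_zero (n : ℕ) : vanishingForms n 0 = homogeneousSubmodule (Fin 3) ℂ n := by
  rw [homogeneousSubmodule_eq_finsupp_supported, vanishingForms, restrictSupport]
  congr
  ext e
  simp [mem_vanishingExponents]

lemma mem_vanishingForms {n k : ℕ} {p : MvPolynomial (Fin 3) ℂ} :
    p ∈ vanishingForms n k ↔ p.IsHomogeneous n ∧ dehom p ∈ vanishToOrder k := by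
  have hom : p.IsHomogeneous n ↔ ∀ e ∈ p.support, e.degree = n := by
    rw [← mem_homogeneousSubmodule, ← vanishingForms_zero, vanishingForms,
      mem_restrictSupport_iff]
    simp [Set.subset_def, mem_vanishingExponents]
  rw [vanishingForms, mem_restrictSupport_iff]
  simp only [Set.subset_def, mem_coe, mem_vanishingExponents]
  constructor
  · intro h
    have hp := hom.mpr fun e he => (h e he).1
    exact ⟨hp, (dehom_mem_vanishToOrder_iff hp).mpr fun e he => (h e he).2⟩
  · rintro ⟨hp, hv⟩ e he
    exact ⟨hom.mp hp e he, (dehom_mem_vanishToOrder_iff hp).mp hv e he⟩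

/-- Order `0` is no condition: the last entry is only required to be a form of degree `d + 1`. -/
noncomputable def vanishingTriples (d k : ℕ) : Submodule ℂ (Fin 3 → MvPolynomial (Fin 3) ℂ) :=
  Submodule.pi Set.univ fun i => vanishingForms (d + 1) (![k, k, 0] i)

instance (d k : ℕ) : Module.Finite ℂ (vanishingTriples d k) := by
  unfold vanishingTriples
  infer_instance

lemma finrank_vanishingTriples (d k : ℕ) :
    finrank ℂ (vanishingTriples d k) =
      2 * #(vanishingExponents (d + 1) k) + #(vanishingExponents (d + 1) 0) := by
  rw [vanishingTriples, Submodule.finrank_pi_univ, Fin.sum_univ_three]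
  show finrank ℂ (vanishingForms (d + 1) k) + finrank ℂ (vanishingForms (d + 1) k) +
    finrank ℂ (vanishingForms (d + 1) 0) = _
  rw [finrank_vanishingForms, finrank_vanishingForms, two_mul]

lemma MkFiber_eq_inf_ker (d k : ℕ) :
    MkFiber d k = vanishingTriples d k ⊓ LinearMap.ker eulerMap := by
  ext a
  simp only [MkFiber, foliationSpace, vanishingTriples, Submodule.mem_inf, Submodule.mem_iInf,
    Submodule.mem_comap, Submodule.mem_pi, Set.mem_univ, true_implies, Fin.forall_fin_succ,
    IsEmpty.forall_iff, LinearMap.coe_comp, Function.comp_apply, LinearMap.coe_proj, Function.eval,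
    Fin.succ_zero_eq_one, Fin.succ_one_eq_two, Matrix.cons_val_zero, Matrix.cons_val_one,
    Matrix.cons_val_two, Matrix.tail_cons, Matrix.head_cons, mem_homogeneousSubmodule,
    mem_vanishingForms, vanishToOrder_zero, Submodule.mem_top, and_true]
  tauto

lemma eulerMap_apply (a : Fin 3 → MvPolynomial (Fin 3) ℂ) : eulerMap a = ∑ i, a i * X i := by
  simp [eulerMap]

lemma eulerMap_single (i : Fin 3) (p : MvPolynomial (Fin 3) ℂ) :
    eulerMap (Pi.single i p) = p * X i := by
  simp [eulerMap_apply, Pi.single_apply]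

lemma map_eulerMap_vanishingTriples {d k : ℕ} (hk : k ≤ d + 1) :
    (vanishingTriples d k).map eulerMap = homogeneousSubmodule (Fin 3) ℂ (d + 2) := by
  apply le_antisymm
  · rintro _ ⟨a, ha, rfl⟩
    rw [eulerMap_apply]
    exact IsHomogeneous.sum _ _ _ fun i _ =>
      (mem_vanishingForms.mp (ha i trivial)).1.mul (isHomogeneous_X ℂ i)
  · rw [← vanishingForms_zero, vanishingForms, restrictSupport_eq_span, Submodule.span_le]
    rintro _ ⟨e, he, rfl⟩
    rw [mem_coe, mem_vanishingExponents, Finsupp.degree_fin_three] at he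
    obtain ⟨i, hi, hmem⟩ : ∃ i, e i ≠ 0 ∧
        e - Finsupp.single i 1 ∈ vanishingExponents (d + 1) (![k, k, 0] i) := by
      simp only [mem_vanishingExponents, Finsupp.degree_fin_three, Finsupp.coe_tsub, Pi.sub_apply]
      obtain h | ⟨h2, h⟩ | ⟨h2, h⟩ : e 2 ≠ 0 ∨ e 2 = 0 ∧ e 0 ≠ 0 ∨ e 2 = 0 ∧ e 1 ≠ 0 := by omega
      all_goals
        first | refine ⟨2, h, ?_⟩ | refine ⟨0, h, ?_⟩ | refine ⟨1, h, ?_⟩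
        simp only [Finsupp.single_apply, Fin.reduceEq, ↓reduceIte, tsub_zero, Matrix.cons_val_zero,
          Matrix.cons_val_one, Matrix.cons_val_two, Matrix.tail_cons, Matrix.head_cons]
        omega
    exact ⟨Pi.single i _,
      Submodule.le_comap_single_pi _ ((monomial_mem_restrictSupport ℂ).mpr (.inl hmem)),
      (eulerMap_single i _).trans (monomial_eq_monomial_sub_single_mul_X hi 1).symm⟩

theorem dim_MkFiber_general (d k : ℕ) (hk2 : k ≤ d + 1) :
    Module.finrank ℂ (MkFiber d k) = d ^ 2 + 4 * d + 3 - k * (k + 1) := by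
  have h := (vanishingTriples d k).finrank_inf_ker_add_finrank_map eulerMap
  rw [← MkFiber_eq_inf_ker, map_eulerMap_vanishingTriples hk2, finrank_vanishingTriples,
    ← vanishingForms_zero, finrank_vanishingForms] at h
  have hA := two_mul_card_vanishingExponents hk2.step
  have hB := two_mul_card_vanishingExponents_zero (d + 1)
  have hC := two_mul_card_vanishingExponents_zero (d + 2)
  have hk : k * (k + 1) ≤ (d + 2) * (d + 3) := Nat.mul_le_mul (by omega) (by omega)
  have hk' : k * (k + 1) ≤ d ^ 2 + 4 * d + 3 := by nlinarith
  zify [hk, hk'] at *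
  linarith

theorem dim_MkFiber (d k : ℕ) (hk1 : 1 ≤ k) (hk2 : k ≤ d + 1) :
    Module.finrank ℂ (MkFiber d k) = d ^ 2 + 4 * d + 3 - k * (k + 1) :=
  dim_MkFiber_general d k hk2
end

section
/- Let γ, f, u, g, v be formal power series in ℂ⟦t⟧ with γ ≠ 0, with the constant coefficient of γ equal to 0 and the constant coefficient of g nonzero, and suppose f + γ·u + γ'·(g + γ·v) = 0, where γ' is the formal derivative of γ. Then f ≠ 0 and ord(γ) = ord(f) + 1. (Geometrically: if a leaf of the strict transform of a dicritical foliation of order k through the point (0,t₀) of the exceptional divisor is parameterized as x = γ(t), then its intersection multiplicity with the exceptional divisor x = 0 equals the multiplicity of t₀ as a zero of f(1,t) plus one.) -/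
open PowerSeries

/-!
Differentiation lowers the order of a series without constant term by exactly one (characteristic
zero), and `g + γv` is a unit, so `γ'(g + γv)` has order `ord γ - 1`. This is strictly less than
the order of `γu`, hence it is the order of `f = -(γu + γ'(g + γv))`.
-/

namespace PowerSeries

theorem order_derivative_add_one {R : Type*} [CommSemiring R] [NoZeroDivisors R] [CharZero R]
    {φ : R⟦X⟧} (hφ : constantCoeff φ = 0) : (d⁄dX R φ).order + 1 = φ.order := by
  rcases eq_or_ne φ 0 with rfl | hφ0
  · simp
  obtain ⟨m, hm⟩ := ENat.ne_top_iff_exists.mp (order_eq_top.not.mpr hφ0)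
  have hm0 : m ≠ 0 := by
    rintro rfl
    exact order_ne_zero_iff_constCoeff_eq_zero.mpr hφ hm.symm
  obtain ⟨n, rfl⟩ := Nat.exists_eq_add_one_of_ne_zero hm0
  obtain ⟨hlead, hlow⟩ := order_eq_nat.mp hm.symm
  have hderiv : (d⁄dX R φ).order = n := by
    refine order_eq_nat.mpr ⟨?_, fun i hi => ?_⟩
    · rw [coeff_derivative]
      exact mul_ne_zero hlead (Nat.cast_add_one_ne_zero n)
    · rw [coeff_derivative, hlow (i + 1) (by omega), zero_mul]
  rw [hderiv, ← hm, Nat.cast_add, Nat.cast_one]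

theorem order_add_one_eq_of_add_mul_add_derivative_mul_eq_zero {R : Type*} [CommRing R]
    [NoZeroDivisors R] [CharZero R] {γ f u G : R⟦X⟧} (hγ : constantCoeff γ = 0)
    (hG : constantCoeff G ≠ 0) (h : f + γ * u + d⁄dX R γ * G = 0) :
    f.order + 1 = γ.order := by
  rcases eq_or_ne γ 0 with rfl | hγ0
  · simp_all
  have hG0 : G.order = 0 := not_ne_iff.mp (order_ne_zero_iff_constCoeff_eq_zero.not.mpr hG)
  have hγ' : (d⁄dX R γ * G).order + 1 = γ.order := by
    rw [order_mul, hG0, add_zero, order_derivative_add_one hγ]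
  have hfin : (d⁄dX R γ * G).order ≠ ⊤ := by
    intro htop
    rw [htop, top_add, eq_comm, order_eq_top] at hγ'
    exact hγ0 hγ'
  have hlt : (d⁄dX R γ * G).order < (γ * u).order :=
    calc _ < γ.order := (ENat.add_one_le_iff hfin).mp hγ'.le
      _ ≤ γ.order + u.order := le_self_add
      _ ≤ (γ * u).order := le_order_mul γ u
  have hf : f = -(γ * u + d⁄dX R γ * G) := by linear_combination h
  rw [hf, order_neg, order_add_of_order_ne _ _ hlt.ne', min_eq_right hlt.le, hγ']

end PowerSeries

/-- For a leaf `x = γ(t)` of the strict transform of a dicritical foliation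
through a nonsingular point of the exceptional divisor: from the relation
`f + γu + γ'(g + γv) = 0` with `γ(0) = 0`, `γ ≠ 0` and `g(0) ≠ 0`, one gets
`f ≠ 0` and `ord(γ) = ord(f) + 1` (intersection multiplicity with the
exceptional divisor is the multiplicity of the zero of `f` plus one). -/
theorem order_leaf_eq_order_f_add_one (γ f u g v : PowerSeries ℂ)
    (hγ0 : γ ≠ 0)
    (hγc : constantCoeff γ = 0)
    (hg : constantCoeff g ≠ 0)
    (heq : f + γ * u + γ.derivativeFun * (g + γ * v) = 0) :
    f ≠ 0 ∧ γ.order = f.order + 1 := by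
  have hunit : constantCoeff (g + γ * v) ≠ 0 := by simpa [hγc] using hg
  have hord := order_add_one_eq_of_add_mul_add_derivative_mul_eq_zero hγc hunit heq
  refine ⟨fun hf => hγ0 ?_, hord.symm⟩
  rw [← order_eq_top, ← hord, hf, order_zero, top_add]
end

section
/- Let R be a commutative ℚ-algebra and a, b, h ∈ R with a + b = −3h and a·b = 3h². For all integers k ≥ 1 and d ≥ 0, the second elementary symmetric function e₂ of the k(k+1) Chern roots of the jet bundle P^{k−1}(Ω¹(d+2)), namely the elements i·a + (j−i)·b + a + (d+2)·h and i·a + (j−i)·b + b + (d+2)·h for 0 ≤ i ≤ j ≤ k−1, equals (1/2)·k(k+1)·[ (k²+k−1)(d² − (2k−3)d) + (1/4)(4k⁴ − 8k³ − 7k² + 21k − 6) ] · h². (This Chern number c₂(P^{k−1}(Ω¹_{P²}(d+2))) is the degree of the locus M_k ⊂ P^N of degree-d foliations with a singularity of order ≥ k, for 1 ≤ k ≤ d+1.) -/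
/-- Sum of the `k(k+1)` Chern roots of the jet bundle `P^{k−1}(Ω¹(d+2))`. -/
def jetRootSum {R : Type*} [CommRing R] (a b h : R) (k d : ℕ) : R :=
  ∑ j ∈ Finset.range k, ∑ i ∈ Finset.range (j + 1),
    ((i • a + (j - i) • b + a + (d + 2) • h) + (i • a + (j - i) • b + b + (d + 2) • h))

/-- Sum of the squares of the Chern roots of `P^{k−1}(Ω¹(d+2))`. -/
def jetRootSqSum {R : Type*} [CommRing R] (a b h : R) (k d : ℕ) : R :=
  ∑ j ∈ Finset.range k, ∑ i ∈ Finset.range (j + 1),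
    ((i • a + (j - i) • b + a + (d + 2) • h) ^ 2
      + (i • a + (j - i) • b + b + (d + 2) • h) ^ 2)

section Aux

variable {R : Type*} [CommRing R]

lemma psum1 (x y : R) (n : ℕ) :
    (12 : R) * ∑ i ∈ Finset.range n, ((i : R) * x + y)
      = 6 * (n : R) * ((n : R) - 1) * x + 12 * (n : R) * y := by
  induction n with
  | zero => simp
  | succ n ih =>
    rw [Finset.sum_range_succ, mul_add, ih]
    push_cast
    ring

lemma psum2 (x y z : R) (n : ℕ) :
    (12 : R) * ∑ i ∈ Finset.range n, ((i : R) ^ 2 * x + (i : R) * y + z)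
      = 2 * (n : R) * ((n : R) - 1) * (2 * (n : R) - 1) * x
        + 6 * (n : R) * ((n : R) - 1) * y + 12 * (n : R) * z := by
  induction n with
  | zero => simp
  | succ n ih =>
    rw [Finset.sum_range_succ, mul_add, ih]
    push_cast
    ring

lemma psum3 (w x y z : R) (n : ℕ) :
    (12 : R) * ∑ i ∈ Finset.range n,
        ((i : R) ^ 3 * w + (i : R) ^ 2 * x + (i : R) * y + z)
      = 3 * ((n : R) * ((n : R) - 1)) ^ 2 * w
        + 2 * (n : R) * ((n : R) - 1) * (2 * (n : R) - 1) * x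
        + 6 * (n : R) * ((n : R) - 1) * y + 12 * (n : R) * z := by
  induction n with
  | zero => simp
  | succ n ih =>
    rw [Finset.sum_range_succ, mul_add, ih]
    push_cast
    ring

lemma rowS (a b h : R) (j d : ℕ) :
    (12 : R) * ∑ i ∈ Finset.range (j + 1),
        ((i • a + (j - i) • b + a + (d + 2) • h) + (i • a + (j - i) • b + b + (d + 2) • h))
      = (j : R) ^ 2 * (12 * b + 12 * a)
        + (j : R) * (48 * h + 24 * b + 24 * a + 24 * (d : R) * h)
        + (48 * h + 12 * b + 12 * a + 24 * (d : R) * h) := by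
  have hc : ∀ i ∈ Finset.range (j + 1),
      ((i • a + (j - i) • b + a + (d + 2) • h) + (i • a + (j - i) • b + b + (d + 2) • h))
        = (i : R) * (2 * a - 2 * b)
          + (2 * (j : R) * b + a + b + (2 * (d : R) + 4) * h) := by
    intro i hi
    have hle : i ≤ j := Nat.lt_succ_iff.mp (Finset.mem_range.mp hi)
    simp only [nsmul_eq_mul]
    push_cast [Nat.cast_sub hle]
    ring
  rw [Finset.sum_congr rfl hc, psum1]
  push_cast
  ring

lemma rowQ (a b h : R) (j d : ℕ) :
    (12 : R) * ∑ i ∈ Finset.range (j + 1),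
        ((i • a + (j - i) • b + a + (d + 2) • h) ^ 2
          + (i • a + (j - i) • b + b + (d + 2) • h) ^ 2)
      = (j : R) ^ 3 * (8 * b ^ 2 + 8 * a * b + 8 * a ^ 2)
        + (j : R) ^ 2 * (48 * b * h + 24 * b ^ 2 + 48 * a * h + 24 * a * b + 24 * a ^ 2
            + 24 * (d : R) * b * h + 24 * (d : R) * a * h)
        + (j : R) * (96 * h ^ 2 + 96 * b * h + 28 * b ^ 2 + 96 * a * h + 16 * a * b
            + 28 * a ^ 2 + 96 * (d : R) * h ^ 2 + 48 * (d : R) * b * h + 48 * (d : R) * a * h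
            + 24 * (d : R) ^ 2 * h ^ 2)
        + (96 * h ^ 2 + 48 * b * h + 12 * b ^ 2 + 48 * a * h + 12 * a ^ 2
            + 96 * (d : R) * h ^ 2 + 24 * (d : R) * b * h + 24 * (d : R) * a * h
            + 24 * (d : R) ^ 2 * h ^ 2) := by
  have hc : ∀ i ∈ Finset.range (j + 1),
      ((i • a + (j - i) • b + a + (d + 2) • h) ^ 2
          + (i • a + (j - i) • b + b + (d + 2) • h) ^ 2)
        = (i : R) ^ 2 * (2 * (a - b) ^ 2)
          + (i : R) * (2 * (a - b) * (2 * (j : R) * b + a + b + (2 * (d : R) + 4) * h))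
          + (((j : R) * b + a + ((d : R) + 2) * h) ^ 2
              + ((j : R) * b + b + ((d : R) + 2) * h) ^ 2) := by
    intro i hi
    have hle : i ≤ j := Nat.lt_succ_iff.mp (Finset.mem_range.mp hi)
    simp only [nsmul_eq_mul]
    push_cast [Nat.cast_sub hle]
    ring
  rw [Finset.sum_congr rfl hc, psum2]
  push_cast
  ring

lemma sumS (a b h : R) (k d : ℕ) :
    (144 : R) * jetRootSum a b h k d
      = 288 * (k : R) * h + 24 * (k : R) * b + 24 * (k : R) * a
        + 144 * (k : R) * (d : R) * h + 288 * (k : R) ^ 2 * h + 72 * (k : R) ^ 2 * b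
        + 72 * (k : R) ^ 2 * a + 144 * (k : R) ^ 2 * (d : R) * h
        + 48 * (k : R) ^ 3 * b + 48 * (k : R) ^ 3 * a := by
  unfold jetRootSum
  rw [show (144 : R) = 12 * 12 by norm_num, mul_assoc, Finset.mul_sum]
  have hc : ∀ j ∈ Finset.range k,
      (12 : R) * ∑ i ∈ Finset.range (j + 1),
          ((i • a + (j - i) • b + a + (d + 2) • h) + (i • a + (j - i) • b + b + (d + 2) • h))
        = (j : R) ^ 2 * (12 * b + 12 * a)
          + (j : R) * (48 * h + 24 * b + 24 * a + 24 * (d : R) * h)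
          + (48 * h + 12 * b + 12 * a + 24 * (d : R) * h) :=
    fun j _ => rowS a b h j d
  rw [Finset.sum_congr rfl hc, psum2]
  ring

lemma sumQ (a b h : R) (k d : ℕ) :
    (144 : R) * jetRootSqSum a b h k d
      = 576 * (k : R) * h ^ 2 + 96 * (k : R) * b * h + 24 * (k : R) * b ^ 2
        + 96 * (k : R) * a * h + (-48) * (k : R) * a * b + 24 * (k : R) * a ^ 2
        + 576 * (k : R) * (d : R) * h ^ 2 + 48 * (k : R) * (d : R) * b * h
        + 48 * (k : R) * (d : R) * a * h + 144 * (k : R) * (d : R) ^ 2 * h ^ 2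
        + 576 * (k : R) ^ 2 * h ^ 2 + 288 * (k : R) ^ 2 * b * h + 48 * (k : R) ^ 2 * b ^ 2
        + 288 * (k : R) ^ 2 * a * h + (-24) * (k : R) ^ 2 * a * b + 48 * (k : R) ^ 2 * a ^ 2
        + 576 * (k : R) ^ 2 * (d : R) * h ^ 2 + 144 * (k : R) ^ 2 * (d : R) * b * h
        + 144 * (k : R) ^ 2 * (d : R) * a * h + 144 * (k : R) ^ 2 * (d : R) ^ 2 * h ^ 2
        + 192 * (k : R) ^ 3 * b * h + 48 * (k : R) ^ 3 * b ^ 2 + 192 * (k : R) ^ 3 * a * h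
        + 48 * (k : R) ^ 3 * a * b + 48 * (k : R) ^ 3 * a ^ 2
        + 96 * (k : R) ^ 3 * (d : R) * b * h + 96 * (k : R) ^ 3 * (d : R) * a * h
        + 24 * (k : R) ^ 4 * b ^ 2 + 24 * (k : R) ^ 4 * a * b + 24 * (k : R) ^ 4 * a ^ 2 := by
  unfold jetRootSqSum
  rw [show (144 : R) = 12 * 12 by norm_num, mul_assoc, Finset.mul_sum]
  have hc : ∀ j ∈ Finset.range k,
      (12 : R) * ∑ i ∈ Finset.range (j + 1),
          ((i • a + (j - i) • b + a + (d + 2) • h) ^ 2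
            + (i • a + (j - i) • b + b + (d + 2) • h) ^ 2)
        = (j : R) ^ 3 * (8 * b ^ 2 + 8 * a * b + 8 * a ^ 2)
          + (j : R) ^ 2 * (48 * b * h + 24 * b ^ 2 + 48 * a * h + 24 * a * b + 24 * a ^ 2
              + 24 * (d : R) * b * h + 24 * (d : R) * a * h)
          + (j : R) * (96 * h ^ 2 + 96 * b * h + 28 * b ^ 2 + 96 * a * h + 16 * a * b
              + 28 * a ^ 2 + 96 * (d : R) * h ^ 2 + 48 * (d : R) * b * h
              + 48 * (d : R) * a * h + 24 * (d : R) ^ 2 * h ^ 2)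
          + (96 * h ^ 2 + 48 * b * h + 12 * b ^ 2 + 48 * a * h + 12 * a ^ 2
              + 96 * (d : R) * h ^ 2 + 24 * (d : R) * b * h + 24 * (d : R) * a * h
              + 24 * (d : R) ^ 2 * h ^ 2) :=
    fun j _ => rowQ a b h j d
  rw [Finset.sum_congr rfl hc, psum3]
  ring

lemma key (a b h : R) (hab : a + b = -(3 * h)) (hab2 : a * b = 3 * h ^ 2) (k d : ℕ) :
    (20736 : R) * (jetRootSum a b h k d ^ 2 - jetRootSqSum a b h k d)
      = ((-31104) * (k : R) + (-62208) * (k : R) * (d : R) + (-20736) * (k : R) * (d : R) ^ 2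
          + 77760 * (k : R) ^ 2 + 41472 * (k : R) ^ 2 * (d : R) + 72576 * (k : R) ^ 3
          + 124416 * (k : R) ^ 3 * (d : R) + 41472 * (k : R) ^ 3 * (d : R) ^ 2
          + (-77760) * (k : R) ^ 4 + (-20736) * (k : R) ^ 4 * (d : R)
          + 20736 * (k : R) ^ 4 * (d : R) ^ 2 + (-20736) * (k : R) ^ 5
          + (-41472) * (k : R) ^ 5 * (d : R) + 20736 * (k : R) ^ 6) * h ^ 2 := by
  have hS := sumS a b h k d
  have hQ := sumQ a b h k d
  linear_combination
    (144 * jetRootSum a b h k d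
        + (288 * (k : R) * h + 24 * (k : R) * b + 24 * (k : R) * a
          + 144 * (k : R) * (d : R) * h + 288 * (k : R) ^ 2 * h + 72 * (k : R) ^ 2 * b
          + 72 * (k : R) ^ 2 * a + 144 * (k : R) ^ 2 * (d : R) * h
          + 48 * (k : R) ^ 3 * b + 48 * (k : R) ^ 3 * a)) * hS
    + (-144 : R) * hQ
    + ((-3456) * (k : R) * h + (-3456) * (k : R) * b + (-3456) * (k : R) * a
        + (-6912) * (k : R) * (d : R) * h + (-8640) * (k : R) ^ 2 * h
        + (-6336) * (k : R) ^ 2 * b + (-6336) * (k : R) ^ 2 * a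
        + (-13824) * (k : R) ^ 2 * (d : R) * h + 38016 * (k : R) ^ 3 * h
        + (-3456) * (k : R) ^ 3 * b + (-3456) * (k : R) ^ 3 * a
        + 13824 * (k : R) ^ 3 * (d : R) * h + 57024 * (k : R) ^ 4 * h
        + 4032 * (k : R) ^ 4 * b + 4032 * (k : R) ^ 4 * a
        + 34560 * (k : R) ^ 4 * (d : R) * h + 6912 * (k : R) ^ 5 * h
        + 6912 * (k : R) ^ 5 * b + 6912 * (k : R) ^ 5 * a
        + 13824 * (k : R) ^ 5 * (d : R) * h + (-6912) * (k : R) ^ 6 * h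
        + 2304 * (k : R) ^ 6 * b + 2304 * (k : R) ^ 6 * a) * hab
    + (13824 * (k : R) + 17280 * (k : R) ^ 2 + 6912 * (k : R) ^ 3
        + 3456 * (k : R) ^ 4) * hab2

end Aux

/-- The degree of the locus `M_k` of degree-`d` foliations with a singularity of
order `≥ k`: the second elementary symmetric function of the Chern roots of the
jet bundle `P^{k−1}(Ω¹(d+2))` equals the stated polynomial in `k, d` times `h²`. -/
theorem degree_Mk {R : Type*} [CommRing R] [Algebra ℚ R] (a b h : R)
    (hab : a + b = -(3 * h)) (hab2 : a * b = 3 * h ^ 2)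
    (k d : ℕ) (hk : 1 ≤ k) :
    ((1 : ℚ) / 2) • (jetRootSum a b h k d ^ 2 - jetRootSqSum a b h k d) =
      (((1 : ℚ) / 2) * ((k : ℚ) * ((k : ℚ) + 1)) *
        (((k : ℚ) ^ 2 + (k : ℚ) - 1) * ((d : ℚ) ^ 2 - (2 * (k : ℚ) - 3) * (d : ℚ))
          + (1 / 4) * (4 * (k : ℚ) ^ 4 - 8 * (k : ℚ) ^ 3 - 7 * (k : ℚ) ^ 2
              + 21 * (k : ℚ) - 6))) • h ^ 2 := by
  have hkey := key a b h hab hab2 k d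
  have h1 : (20736 : R) * (jetRootSum a b h k d ^ 2 - jetRootSqSum a b h k d)
      = (20736 : ℚ) • (jetRootSum a b h k d ^ 2 - jetRootSqSum a b h k d) := by
    rw [Algebra.smul_def, map_ofNat]
  have h2 : ((-31104) * (k : R) + (-62208) * (k : R) * (d : R)
        + (-20736) * (k : R) * (d : R) ^ 2 + 77760 * (k : R) ^ 2
        + 41472 * (k : R) ^ 2 * (d : R) + 72576 * (k : R) ^ 3
        + 124416 * (k : R) ^ 3 * (d : R) + 41472 * (k : R) ^ 3 * (d : R) ^ 2
        + (-77760) * (k : R) ^ 4 + (-20736) * (k : R) ^ 4 * (d : R)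
        + 20736 * (k : R) ^ 4 * (d : R) ^ 2 + (-20736) * (k : R) ^ 5
        + (-41472) * (k : R) ^ 5 * (d : R) + 20736 * (k : R) ^ 6) * h ^ 2
      = (((-31104) * (k : ℚ) + (-62208) * (k : ℚ) * (d : ℚ)
          + (-20736) * (k : ℚ) * (d : ℚ) ^ 2 + 77760 * (k : ℚ) ^ 2
          + 41472 * (k : ℚ) ^ 2 * (d : ℚ) + 72576 * (k : ℚ) ^ 3
          + 124416 * (k : ℚ) ^ 3 * (d : ℚ) + 41472 * (k : ℚ) ^ 3 * (d : ℚ) ^ 2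
          + (-77760) * (k : ℚ) ^ 4 + (-20736) * (k : ℚ) ^ 4 * (d : ℚ)
          + 20736 * (k : ℚ) ^ 4 * (d : ℚ) ^ 2 + (-20736) * (k : ℚ) ^ 5
          + (-41472) * (k : ℚ) ^ 5 * (d : ℚ) + 20736 * (k : ℚ) ^ 6) : ℚ) • h ^ 2 := by
    rw [Algebra.smul_def]
    simp only [map_add, map_mul, map_pow, map_neg, map_ofNat, map_natCast]
  rw [h1, h2] at hkey
  have h3 : ((1 : ℚ) / 2) • (jetRootSum a b h k d ^ 2 - jetRootSqSum a b h k d)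
      = ((1 : ℚ) / 41472) •
          ((20736 : ℚ) • (jetRootSum a b h k d ^ 2 - jetRootSqSum a b h k d)) := by
    rw [smul_smul]
    norm_num
  rw [h3, hkey, smul_smul]
  congr 1
  ring
end

section
/- Let R be a commutative ℚ-algebra and a, b, h ∈ R with a + b = −3h and a·b = 3h². For all integers k ≥ 1 and d ≥ 0, the second elementary symmetric function e₂ of the combined family consisting of the k(k+1) Chern roots of P^{k−1}(Ω¹(d+2)) together with the k+2 Chern roots of Sym^{k+1}Ω¹ ⊗ O(d+2) equals (k+1)²·[ (1/2)(k⁴ + k² − 2k + 2) − (k³ + k² + k − 1)d + (1/2)(k² + 2k + 2)d² ] · h². (This is the degree-2 part of c(P^{k−1}(Ω¹(d+2)))·c(Sym^{k+1}Ω¹(d+2)), and it is the degree of the locus D_k ⊂ P^N of degree-d foliations with a dicritical singularity of order ≥ k, for 1 ≤ k ≤ d.) -/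
/-- Sum of the `k+2` Chern roots of `Sym^{k+1}Ω¹ ⊗ O(d+2)`. -/
def symRootSum {R : Type*} [CommRing R] (a b h : R) (k d : ℕ) : R :=
  ∑ i ∈ Finset.range (k + 2), (i • a + (k + 1 - i) • b + (d + 2) • h)

/-- Sum of the squares of the Chern roots of `Sym^{k+1}Ω¹ ⊗ O(d+2)`. -/
def symRootSqSum {R : Type*} [CommRing R] (a b h : R) (k d : ℕ) : R :=
  ∑ i ∈ Finset.range (k + 2), (i • a + (k + 1 - i) • b + (d + 2) • h) ^ 2


section AuxDicritical

variable {R : Type*} [CommRing R]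

private lemma aux_jet1 (a b h : R) (j d : ℕ) (n : ℕ) (hn : n ≤ j + 1) :
    ∑ i ∈ Finset.range n,
      ((i • a + (j - i) • b + a + (d + 2) • h) + (i • a + (j - i) • b + b + (d + 2) • h)) =
      a * (n:R) ^ 2 - b * (n:R) ^ 2 + 2 * b * (n:R) * (j:R) + 2 * b * (n:R) + 2 * h * (d:R) * (n:R) + 4 * h * (n:R) := by
  induction n with
  | zero => simp
  | succ n ih =>
    have h1 : n ≤ j := Nat.lt_succ_iff.mp hn
    rw [Finset.sum_range_succ, ih (Nat.le_of_succ_le hn)]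
    simp only [nsmul_eq_mul]
    push_cast [Nat.cast_sub h1]
    ring

private lemma aux_jet2 (a b h : R) (j d : ℕ) (n : ℕ) (hn : n ≤ j + 1) :
    6 * ∑ i ∈ Finset.range n,
      ((i • a + (j - i) • b + a + (d + 2) • h) ^ 2
        + (i • a + (j - i) • b + b + (d + 2) • h) ^ 2) =
      4 * a ^ 2 * (n:R) ^ 3 + 2 * a ^ 2 * (n:R) - 8 * a * b * (n:R) ^ 3 + 12 * a * b * (n:R) ^ 2 * (j:R) + 12 * a * b * (n:R) ^ 2 - 4 * a * b * (n:R) + 12 * a * h * (d:R) * (n:R) ^ 2 + 24 * a * h * (n:R) ^ 2 + 4 * b ^ 2 * (n:R) ^ 3 - 12 * b ^ 2 * (n:R) ^ 2 * (j:R) - 12 * b ^ 2 * (n:R) ^ 2 + 12 * b ^ 2 * (n:R) * (j:R) ^ 2 + 24 * b ^ 2 * (n:R) * (j:R) + 14 * b ^ 2 * (n:R) - 12 * b * h * (d:R) * (n:R) ^ 2 + 24 * b * h * (d:R) * (n:R) * (j:R) + 24 * b * h * (d:R) * (n:R) - 24 * b * h * (n:R) ^ 2 + 48 * b * h * (n:R)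 * (j:R) + 48 * b * h * (n:R) + 12 * h ^ 2 * (d:R) ^ 2 * (n:R) + 48 * h ^ 2 * (d:R) * (n:R) + 48 * h ^ 2 * (n:R) := by
  induction n with
  | zero => simp
  | succ n ih =>
    have h1 : n ≤ j := Nat.lt_succ_iff.mp hn
    rw [Finset.sum_range_succ, mul_add, ih (Nat.le_of_succ_le hn)]
    simp only [nsmul_eq_mul]
    push_cast [Nat.cast_sub h1]
    ring

private lemma aux_sym1 (a b h : R) (k d : ℕ) (n : ℕ) (hn : n ≤ k + 2) :
    2 * ∑ i ∈ Finset.range n, (i • a + (k + 1 - i) • b + (d + 2) • h) =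
      a * (n:R) ^ 2 - a * (n:R) + 2 * b * (k:R) * (n:R) - b * (n:R) ^ 2 + 3 * b * (n:R) + 2 * h * (d:R) * (n:R) + 4 * h * (n:R) := by
  induction n with
  | zero => simp
  | succ n ih =>
    have h1 : n ≤ k + 1 := Nat.lt_succ_iff.mp hn
    rw [Finset.sum_range_succ, mul_add, ih (Nat.le_of_succ_le hn)]
    simp only [nsmul_eq_mul]
    push_cast [Nat.cast_sub h1]
    ring

private lemma aux_sym2 (a b h : R) (k d : ℕ) (n : ℕ) (hn : n ≤ k + 2) :
    6 * ∑ i ∈ Finset.range n, (i • a + (k + 1 - i) • b + (d + 2) • h) ^ 2 =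
      2 * a ^ 2 * (n:R) ^ 3 - 3 * a ^ 2 * (n:R) ^ 2 + a ^ 2 * (n:R) + 6 * a * b * (k:R) * (n:R) ^ 2 - 6 * a * b * (k:R) * (n:R) - 4 * a * b * (n:R) ^ 3 + 12 * a * b * (n:R) ^ 2 - 8 * a * b * (n:R) + 6 * a * h * (d:R) * (n:R) ^ 2 - 6 * a * h * (d:R) * (n:R) + 12 * a * h * (n:R) ^ 2 - 12 * a * h * (n:R) + 6 * b ^ 2 * (k:R) ^ 2 * (n:R) - 6 * b ^ 2 * (k:R) * (n:R) ^ 2 + 18 * b ^ 2 * (k:R) * (n:R) + 2 * b ^ 2 * (n:R) ^ 3 - 9 * b ^ 2 * (n:R) ^ 2 + 13 * b ^ 2 * (n:R) + 12 * b * h * (k:R) * (d:R) * (n:R) + 24 * b * h * (k:R) * (n:R) - 6 * b * h * (d:R) * (n:R) ^ 2 + 18 * b * h * (d:R) * (n:R) - 12 * b * h * (n:R) ^ 2 + 36 * b * h * (n:R) + 6 * h ^ 2 * (d:R) ^ 2 * (n:R) + 24 * h ^ 2 * (d:R) * (n:R) + 24 * h ^ 2 * (n:R) := by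
  induction n with
  | zero => simp
  | succ n ih =>
    have h1 : n ≤ k + 1 := Nat.lt_succ_iff.mp hn
    rw [Finset.sum_range_succ, mul_add, ih (Nat.le_of_succ_le hn)]
    simp only [nsmul_eq_mul]
    push_cast [Nat.cast_sub h1]
    ring

private lemma jet1_closed (a b h : R) (hab : a + b = -(3 * h)) (k d : ℕ) :
    6 * jetRootSum a b h k d = -6 * h * (k:R) ^ 3 + 6 * h * (k:R) ^ 2 * (d:R) + 3 * h * (k:R) ^ 2 + 6 * h * (k:R) * (d:R) + 9 * h * (k:R) := by
  induction k with
  | zero => simp [jetRootSum]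
  | succ k ih =>
    simp only [jetRootSum] at ih ⊢
    rw [Finset.sum_range_succ, mul_add, ih]
    have H := aux_jet1 a b h k d (k + 1) le_rfl
    push_cast at H ⊢
    linear_combination 6 * H + (6 * (k:R) ^ 2 + 12 * (k:R) + 6) * hab

private lemma jet2_closed (a b h : R) (hab : a + b = -(3 * h))
    (hab2 : a * b = 3 * h ^ 2) (k d : ℕ) :
    72 * jetRootSqSum a b h k d = 72 * h ^ 2 * (k:R) ^ 4 - 144 * h ^ 2 * (k:R) ^ 3 * (d:R) - 144 * h ^ 2 * (k:R) ^ 3 + 72 * h ^ 2 * (k:R) ^ 2 * (d:R) ^ 2 + 72 * h ^ 2 * (k:R) ^ 2 * (d:R) - 108 * h ^ 2 * (k:R) ^ 2 + 72 * h ^ 2 * (k:R) * (d:R) ^ 2 + 216 * h ^ 2 * (k:R) * (d:R) + 108 * h ^ 2 * (k:R) := by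
  induction k with
  | zero => simp [jetRootSqSum]
  | succ k ih =>
    simp only [jetRootSqSum] at ih ⊢
    rw [Finset.sum_range_succ, mul_add, ih]
    have H := aux_jet2 a b h k d (k + 1) le_rfl
    push_cast at H ⊢
    linear_combination 12 * H + (48 * a * (k:R) ^ 3 + 144 * a * (k:R) ^ 2 + 168 * a * (k:R) + 72 * a + 48 * b * (k:R) ^ 3 + 144 * b * (k:R) ^ 2 + 168 * b * (k:R) + 72 * b - 144 * h * (k:R) ^ 3 + 144 * h * (k:R) ^ 2 * (d:R) - 144 * h * (k:R) ^ 2 + 288 * h * (k:R) * (d:R) + 72 * h * (k:R) + 144 * h * (d:R) + 72 * h) * hab + (-48 * (k:R) ^ 3 - 144 * (k:R) ^ 2 - 240 * (k:R) - 144) * hab2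

private lemma sym1_closed (a b h : R) (hab : a + b = -(3 * h)) (k d : ℕ) :
    2 * symRootSum a b h k d = -3 * h * (k:R) ^ 2 + 2 * h * (k:R) * (d:R) - 5 * h * (k:R) + 4 * h * (d:R) + 2 * h := by
  have H := aux_sym1 a b h k d (k + 2) le_rfl
  simp only [symRootSum]
  push_cast at H ⊢
  linear_combination H + ((k:R) ^ 2 + 3 * (k:R) + 2) * hab

private lemma sym2_closed (a b h : R) (hab : a + b = -(3 * h))
    (hab2 : a * b = 3 * h ^ 2) (k d : ℕ) :
    6 * symRootSqSum a b h k d = 12 * h ^ 2 * (k:R) ^ 3 - 18 * h ^ 2 * (k:R) ^ 2 * (d:R) + 9 * h ^ 2 * (k:R) ^ 2 + 6 * h ^ 2 * (k:R) * (d:R) ^ 2 - 30 * h ^ 2 * (k:R) * (d:R) - 33 * h ^ 2 * (k:R) + 12 * h ^ 2 * (d:R) ^ 2 + 12 * h ^ 2 * (d:R) - 6 * h ^ 2 := by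
  have H := aux_sym2 a b h k d (k + 2) le_rfl
  simp only [symRootSqSum]
  push_cast at H ⊢
  linear_combination H + (2 * a * (k:R) ^ 3 + 9 * a * (k:R) ^ 2 + 13 * a * (k:R) + 6 * a + 2 * b * (k:R) ^ 3 + 9 * b * (k:R) ^ 2 + 13 * b * (k:R) + 6 * b - 6 * h * (k:R) ^ 3 + 6 * h * (k:R) ^ 2 * (d:R) - 15 * h * (k:R) ^ 2 + 18 * h * (k:R) * (d:R) - 3 * h * (k:R) + 12 * h * (d:R) + 6 * h) * hab + (-2 * (k:R) ^ 3 - 12 * (k:R) ^ 2 - 22 * (k:R) - 12) * hab2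

end AuxDicritical

/-- The degree of the locus `D_k` of degree-`d` foliations with a dicritical
singularity of order `≥ k`: the second elementary symmetric function of the
combined family of Chern roots of `P^{k−1}(Ω¹(d+2))` and `Sym^{k+1}Ω¹ ⊗ O(d+2)`
equals the stated polynomial in `k, d` times `h²`. -/
theorem degree_Dk {R : Type*} [CommRing R] [Algebra ℚ R] (a b h : R)
    (hab : a + b = -(3 * h)) (hab2 : a * b = 3 * h ^ 2)
    (k d : ℕ) (hk : 1 ≤ k) :
    ((1 : ℚ) / 2) • ((jetRootSum a b h k d + symRootSum a b h k d) ^ 2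
        - (jetRootSqSum a b h k d + symRootSqSum a b h k d)) =
      (((k : ℚ) + 1) ^ 2 *
        ((1 / 2) * ((k : ℚ) ^ 4 + (k : ℚ) ^ 2 - 2 * (k : ℚ) + 2)
          - ((k : ℚ) ^ 3 + (k : ℚ) ^ 2 + (k : ℚ) - 1) * (d : ℚ)
          + (1 / 2) * ((k : ℚ) ^ 2 + 2 * (k : ℚ) + 2) * (d : ℚ) ^ 2)) • h ^ 2 := by
  have hJ := jet1_closed a b h hab k d
  have hS := sym1_closed a b h hab k d
  have hJ2 := jet2_closed a b h hab hab2 k d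
  have hS2 := sym2_closed a b h hab hab2 k d
  set J := jetRootSum a b h k d with hJdef
  set S := symRootSum a b h k d with hSdef
  set J2 := jetRootSqSum a b h k d with hJ2def
  set S2 := symRootSqSum a b h k d with hS2def
  have hw : 12 * (J + S) = (-12 * (k:R) ^ 3 + 12 * (k:R) ^ 2 * (d:R) - 12 * (k:R) ^ 2 + 24 * (k:R) * (d:R) - 12 * (k:R) + 24 * (d:R) + 12) * h := by
    linear_combination 2 * hJ + 6 * hS
  have hsq : 144 * (J + S) ^ 2 = (-12 * (k:R) ^ 3 + 12 * (k:R) ^ 2 * (d:R) - 12 * (k:R) ^ 2 + 24 * (k:R) * (d:R) - 12 * (k:R) + 24 * (d:R) + 12) ^ 2 * h ^ 2 := by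
    linear_combination (12 * (J + S) + (-12 * (k:R) ^ 3 + 12 * (k:R) ^ 2 * (d:R) - 12 * (k:R) ^ 2 + 24 * (k:R) * (d:R) - 12 * (k:R) + 24 * (d:R) + 12) * h) * hw
  have hX : 288 * ((J + S) ^ 2 - (J2 + S2)) =
      (288 * (k:R) ^ 6 - 576 * (k:R) ^ 5 * (d:R) + 576 * (k:R) ^ 5 + 288 * (k:R) ^ 4 * (d:R) ^ 2 - 1728 * (k:R) ^ 4 * (d:R) + 576 * (k:R) ^ 4 + 1152 * (k:R) ^ 3 * (d:R) ^ 2 - 2304 * (k:R) ^ 3 * (d:R) + 2016 * (k:R) ^ 2 * (d:R) ^ 2 - 1152 * (k:R) ^ 2 * (d:R) - 288 * (k:R) ^ 2 + 1728 * (k:R) * (d:R) ^ 2 + 576 * (k:R) * (d:R) + 576 * (k:R) + 576 * (d:R) ^ 2 + 576 * (d:R) + 576) * h ^ 2 := by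
    linear_combination 2 * hsq - 4 * hJ2 - 48 * hS2
  have bridge : (288 * (k:ℚ) ^ 6 - 576 * (k:ℚ) ^ 5 * (d:ℚ) + 576 * (k:ℚ) ^ 5 + 288 * (k:ℚ) ^ 4 * (d:ℚ) ^ 2 - 1728 * (k:ℚ) ^ 4 * (d:ℚ) + 576 * (k:ℚ) ^ 4 + 1152 * (k:ℚ) ^ 3 * (d:ℚ) ^ 2 - 2304 * (k:ℚ) ^ 3 * (d:ℚ) + 2016 * (k:ℚ) ^ 2 * (d:ℚ) ^ 2 - 1152 * (k:ℚ) ^ 2 * (d:ℚ) - 288 * (k:ℚ) ^ 2 + 1728 * (k:ℚ) * (d:ℚ) ^ 2 + 576 * (k:ℚ) * (d:ℚ) + 576 * (k:ℚ) + 576 * (d:ℚ) ^ 2 + 576 * (d:ℚ) + 576) • (h ^ 2) = (288 * (k:R) ^ 6 - 576 * (k:R) ^ 5 * (d:R) + 576 * (k:R) ^ 5 + 288 * (k:R) ^ 4 * (d:R) ^ 2 - 1728 * (k:R) ^ 4 * (d:R) + 576 * (k:R) ^ 4 + 1152 * (k:R) ^ 3 * (d:R) ^ 2 - 2304 * (k:R)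 ^ 3 * (d:R) + 2016 * (k:R) ^ 2 * (d:R) ^ 2 - 1152 * (k:R) ^ 2 * (d:R) - 288 * (k:R) ^ 2 + 1728 * (k:R) * (d:R) ^ 2 + 576 * (k:R) * (d:R) + 576 * (k:R) + 576 * (d:R) ^ 2 + 576 * (d:R) + 576) * h ^ 2 := by
    rw [Algebra.smul_def]
    simp only [map_sub, map_add, map_mul, map_pow, map_natCast, map_ofNat, map_one]
  have hXq : ((288 : ℚ)) • ((J + S) ^ 2 - (J2 + S2)) = (288 * (k:ℚ) ^ 6 - 576 * (k:ℚ) ^ 5 * (d:ℚ) + 576 * (k:ℚ) ^ 5 + 288 * (k:ℚ) ^ 4 * (d:ℚ) ^ 2 - 1728 * (k:ℚ) ^ 4 * (d:ℚ) + 576 * (k:ℚ) ^ 4 + 1152 * (k:ℚ) ^ 3 * (d:ℚ) ^ 2 - 2304 * (k:ℚ) ^ 3 * (d:ℚ) + 2016 * (k:ℚ) ^ 2 * (d:ℚ) ^ 2 - 1152 * (k:ℚ) ^ 2 * (d:ℚ) - 288 * (k:ℚ) ^ 2 + 1728 * (k:ℚ) * (d:ℚ) ^ 2 + 576 * (k:ℚ)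 * (d:ℚ) + 576 * (k:ℚ) + 576 * (d:ℚ) ^ 2 + 576 * (d:ℚ) + 576) • (h ^ 2) := by
    rw [bridge, show ((288 : ℚ)) = ((288 : ℕ) : ℚ) from by norm_num,
      Nat.cast_smul_eq_nsmul, nsmul_eq_mul]
    push_cast
    linear_combination hX
  calc ((1 : ℚ) / 2) • ((J + S) ^ 2 - (J2 + S2))
      = ((1 : ℚ) / 576) • (((288 : ℚ)) • ((J + S) ^ 2 - (J2 + S2))) := by
        rw [smul_smul]; norm_num
    _ = ((1 : ℚ) / 576) • ((288 * (k:ℚ) ^ 6 - 576 * (k:ℚ) ^ 5 * (d:ℚ) + 576 * (k:ℚ) ^ 5 + 288 * (k:ℚ) ^ 4 * (d:ℚ) ^ 2 - 1728 * (k:ℚ) ^ 4 * (d:ℚ) + 576 * (k:ℚ) ^ 4 + 1152 * (k:ℚ) ^ 3 * (d:ℚ) ^ 2 - 2304 * (k:ℚ) ^ 3 * (d:ℚ) + 2016 * (k:ℚ) ^ 2 * (d:ℚ) ^ 2 - 1152 * (k:ℚ) ^ 2 * (d:ℚ) - 288 * (k:ℚ) ^ 2 + 1728 * (k:ℚ)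 * (d:ℚ) ^ 2 + 576 * (k:ℚ) * (d:ℚ) + 576 * (k:ℚ) + 576 * (d:ℚ) ^ 2 + 576 * (d:ℚ) + 576) • (h ^ 2)) := by rw [hXq]
    _ = (((k : ℚ) + 1) ^ 2 *
        ((1 / 2) * ((k : ℚ) ^ 4 + (k : ℚ) ^ 2 - 2 * (k : ℚ) + 2)
          - ((k : ℚ) ^ 3 + (k : ℚ) ^ 2 + (k : ℚ) - 1) * (d : ℚ)
          + (1 / 2) * ((k : ℚ) ^ 2 + 2 * (k : ℚ) + 2) * (d : ℚ) ^ 2)) • h ^ 2 := by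
        rw [smul_smul]
        congr 1
        ring
end

section
/- Let R be a commutative ℚ-algebra and a, b, h ∈ R with a + b = −3h and a·b = 3h². For every integer d ≥ 0, the second elementary symmetric function e₂ of the five elements a + (d+2)h, b + (d+2)h, 2a + (d+2)h, a + b + (d+2)h, 2b + (d+2)h equals (10d² − 8d + 4)·h². (This is the degree of the locus D₁ ⊂ P^N of degree-d foliations with a radial singularity, i.e., a dicritical singularity of order 1; the codimension of D₁ in P^N is 3.) -/
/-- The degree of the locus `D₁` of degree-`d` foliations with a radial
singularity: the second elementary symmetric function of the five Chern roots
of `Ω¹(d+2)` and `Sym²Ω¹ ⊗ O(d+2)` equals `(10d² − 8d + 4)·h²`. -/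
theorem degree_D1 {R : Type*} [CommRing R] [Algebra ℚ R] (a b h : R)
    (hab : a + b = -(3 * h)) (hab2 : a * b = 3 * h ^ 2) (d : ℕ) :
    ((1 : ℚ) / 2) •
        (((a + (d + 2) • h) + (b + (d + 2) • h) + (2 • a + (d + 2) • h)
            + (a + b + (d + 2) • h) + (2 • b + (d + 2) • h)) ^ 2
          - ((a + (d + 2) • h) ^ 2 + (b + (d + 2) • h) ^ 2 + (2 • a + (d + 2) • h) ^ 2
            + (a + b + (d + 2) • h) ^ 2 + (2 • b + (d + 2) • h) ^ 2)) =
      (10 * (d : ℚ) ^ 2 - 8 * (d : ℚ) + 4) • h ^ 2 := by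
  simp only [Algebra.smul_def, nsmul_eq_mul, Nat.cast_add, Nat.cast_ofNat, map_sub, map_add,
    map_mul, map_pow, map_ofNat, map_natCast, map_one, one_div, eq_natCast (algebraMap ℕ R)]
  set c : R := algebraMap ℚ R 2⁻¹ with hc
  have t : (2 : R) * c = 1 := by
    rw [hc, ← map_ofNat (algebraMap ℚ R) 2, ← map_mul]
    norm_num
  linear_combination ((10 * (d : R) ^ 2 - 8 * (d : R) + 4) * h ^ 2) * t
    + (2 * c * (5 * a + 5 * b + 16 * (d : R) * h + 17 * h)) * hab + (10 * c) * hab2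
end

section
/- Let R be a commutative ℚ-algebra and a, b, h ∈ R with a + b = −3h and a·b = 3h². For all integers k ≥ 2 and d ≥ 0, setting v = −(1/2)(k−1)(k−2)(3k + 2d − 5), one has (k−1)³·s₂(E) − (k−1)·s₂(E_k) − v·h·s₁(E_k) = (1/8)(k−2)(k−1)²(9k² − 47k + 12kd − 60d + 72 + 12d²)·h², where s₁, s₂ denote the first and second Segre classes computed from the Chern roots of E = Ω¹(d−1) and E_k = Sym^{k−1}Ω¹(d−1). (This identity computes the coefficient w in the class [V_k] = u H_k^{k−2} + v h H_k^{k−3} + w h² H_k^{k−4} of the Veronese locus V_k of powers of linear forms inside P(Sym^{k−1}Ω¹ ⊗ ∧²Ω¹ ⊗ O(d+2)).) -/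
/-- Sum of the Chern roots `a + (d−1)h`, `b + (d−1)h` of `E = Ω¹(d−1)`. -/
def rootSumE {R : Type*} [CommRing R] [Algebra ℚ R] (a b h : R) (d : ℕ) : R :=
  (a + ((d : ℚ) - 1) • h) + (b + ((d : ℚ) - 1) • h)

/-- Sum of the squares of the Chern roots of `E = Ω¹(d−1)`. -/
def rootSqSumE {R : Type*} [CommRing R] [Algebra ℚ R] (a b h : R) (d : ℕ) : R :=
  (a + ((d : ℚ) - 1) • h) ^ 2 + (b + ((d : ℚ) - 1) • h) ^ 2

/-- Sum of the Chern roots `i·a + (k−1−i)·b + (d−1)h`, `0 ≤ i ≤ k−1`, of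
`E_k = Sym^{k−1}Ω¹(d−1)`. -/
def rootSumEk {R : Type*} [CommRing R] [Algebra ℚ R] (a b h : R) (k d : ℕ) : R :=
  ∑ i ∈ Finset.range k, (i • a + (k - 1 - i) • b + ((d : ℚ) - 1) • h)

/-- Sum of the squares of the Chern roots of `E_k = Sym^{k−1}Ω¹(d−1)`. -/
def rootSqSumEk {R : Type*} [CommRing R] [Algebra ℚ R] (a b h : R) (k d : ℕ) : R :=
  ∑ i ∈ Finset.range k, (i • a + (k - 1 - i) • b + ((d : ℚ) - 1) • h) ^ 2

/-- Second Segre class `s₂ = e₁² − e₂` of `E = Ω¹(d−1)`, with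
`e₂ = (1/2)(e₁² − Σ r²)`. -/
def segre2E {R : Type*} [CommRing R] [Algebra ℚ R] (a b h : R) (d : ℕ) : R :=
  rootSumE a b h d ^ 2
    - ((1 : ℚ) / 2) • (rootSumE a b h d ^ 2 - rootSqSumE a b h d)

/-- Second Segre class `s₂ = e₁² − e₂` of `E_k = Sym^{k−1}Ω¹(d−1)`. -/
def segre2Ek {R : Type*} [CommRing R] [Algebra ℚ R] (a b h : R) (k d : ℕ) : R :=
  rootSumEk a b h k d ^ 2
    - ((1 : ℚ) / 2) • (rootSumEk a b h k d ^ 2 - rootSqSumEk a b h k d)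

/-- First Segre class `s₁ = −e₁` of `E_k = Sym^{k−1}Ω¹(d−1)`. -/
def segre1Ek {R : Type*} [CommRing R] [Algebra ℚ R] (a b h : R) (k d : ℕ) : R :=
  -rootSumEk a b h k d

/-- Closed form for `∑_{i<k} (A + B i + C i²)` in `ℚ`. -/
lemma sum_poly (A B C : ℚ) (k : ℕ) :
    ∑ i ∈ Finset.range k, (A + B*(i:ℚ) + C*(i:ℚ)^2)
      = (k:ℚ)*A + B*((k:ℚ)*((k:ℚ)-1)/2) + C*((k:ℚ)*((k:ℚ)-1)*(2*(k:ℚ)-1)/6) := by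
  induction k with
  | zero => simp
  | succ n ih => rw [Finset.sum_range_succ, ih]; push_cast; ring

lemma cast_ksub (k i : ℕ) (hi : i < k) : ((k - 1 - i : ℕ) : ℚ) = (k:ℚ) - 1 - (i:ℚ) := by
  rw [Nat.cast_sub (by omega : i ≤ k - 1), Nat.cast_sub (by omega : 1 ≤ k)]
  push_cast; ring

section Aux
variable {R : Type*} [CommRing R] [Algebra ℚ R]

lemma qsmul_eq (q : ℚ) (x : R) : q • x = algebraMap ℚ R q * x := Algebra.smul_def q x

lemma term_cast (a b h : R) (k d i : ℕ) (hi : i < k) :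
    i • a + (k - 1 - i) • b + ((d : ℚ) - 1) • h
      = (i:ℚ) • a + ((k:ℚ) - 1 - (i:ℚ)) • b + ((d : ℚ) - 1) • h := by
  rw [← Nat.cast_smul_eq_nsmul ℚ i a, ← Nat.cast_smul_eq_nsmul ℚ (k-1-i) b,
      cast_ksub k i hi]

lemma sq_term (q r s : ℚ) (a b h : R) (hab : a + b = -(3*h)) (hab2 : a * b = 3*h^2) :
    (q•a + r•b + s•h)^2
      = (2*q*s - 3*q^2)•(a*h) + (2*r*s - 3*r^2)•(b*h)
        + (s^2 + 6*q*r - 3*q^2 - 3*r^2)•(h^2) := by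
  have h3 : (3:R)*(h*h) = (3:ℚ)•(h*h) := by
    rw [qsmul_eq, map_ofNat]
  have ha2 : a*a = (-3:ℚ)•(a*h) - (3:ℚ)•(h*h) := by
    have e : a*a = (a+b)*a - a*b := by ring
    rw [e, hab, hab2, show -(3*h)*a = -(3*(a*h)) by ring, show (3:R)*h^2 = 3*(h*h) by ring,
        h3, show (3:R)*(a*h) = (3:ℚ)•(a*h) by rw [qsmul_eq, map_ofNat], neg_smul]
  have hb2 : b*b = (-3:ℚ)•(b*h) - (3:ℚ)•(h*h) := by
    have e : b*b = (a+b)*b - a*b := by ring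
    rw [e, hab, hab2, show -(3*h)*b = -(3*(b*h)) by ring, show (3:R)*h^2 = 3*(h*h) by ring,
        h3, show (3:R)*(b*h) = (3:ℚ)•(b*h) by rw [qsmul_eq, map_ofNat], neg_smul]
  have hab2' : a*b = (3:ℚ)•(h*h) := by
    rw [hab2, show (3:R)*h^2 = 3*(h*h) by ring, h3]
  simp only [pow_two, add_mul, mul_add, smul_mul_smul_comm]
  rw [show b*a = a*b from mul_comm b a, show h*a = a*h from mul_comm h a,
      show h*b = b*h from mul_comm h b, ha2, hb2, hab2']
  module

lemma habh_aux (a b h : R) (hab : a + b = -(3*h)) :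
    a*h = (-3:ℚ)•(h^2) - b*h := by
  refine eq_sub_of_add_eq ?_
  rw [← add_mul, hab, show -(3*h)*h = -((3:R)*h^2) by ring,
      show (3:R)*h^2 = (3:ℚ)•h^2 by rw [qsmul_eq, map_ofNat], neg_smul]

lemma rootSumE_eq (a b h : R) (d : ℕ) (hab : a + b = -(3*h)) :
    rootSumE a b h d = (2*((d:ℚ)-1) - 3) • h := by
  have e : rootSumE a b h d = (a+b) + (2*((d:ℚ)-1))•h := by
    unfold rootSumE; module
  rw [e, hab, show -(3*h) = (-3:ℚ)•h by rw [neg_smul, qsmul_eq, map_ofNat]]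
  module

lemma rootSqSumE_eq (a b h : R) (d : ℕ) (hab : a + b = -(3*h)) (hab2 : a * b = 3*h^2) :
    rootSqSumE a b h d = (2*((d:ℚ)-1)^2 - 6*((d:ℚ)-1) + 3) • h^2 := by
  unfold rootSqSumE
  rw [show a + ((d:ℚ)-1)•h = (1:ℚ)•a + (0:ℚ)•b + ((d:ℚ)-1)•h by module,
      show b + ((d:ℚ)-1)•h = (0:ℚ)•a + (1:ℚ)•b + ((d:ℚ)-1)•h by module,
      sq_term _ _ _ a b h hab hab2, sq_term _ _ _ a b h hab hab2,
      habh_aux a b h hab]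
  module

lemma rootSumEk_eq (a b h : R) (k d : ℕ) (hab : a + b = -(3*h)) :
    rootSumEk a b h k d
      = (-(3:ℚ)*((k:ℚ)*((k:ℚ)-1)/2) + (k:ℚ)*((d:ℚ)-1)) • h := by
  unfold rootSumEk
  rw [Finset.sum_congr rfl (fun i hi => term_cast a b h k d i (Finset.mem_range.mp hi))]
  simp only [Finset.sum_add_distrib, ← Finset.sum_smul]
  have s1 : ∑ i ∈ Finset.range k, (i:ℚ) = (k:ℚ)*((k:ℚ)-1)/2 := by
    calc ∑ i ∈ Finset.range k, (i:ℚ)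
        = ∑ i ∈ Finset.range k, ((0:ℚ) + 1*(i:ℚ) + 0*(i:ℚ)^2) :=
          Finset.sum_congr rfl (fun i _ => by ring)
      _ = _ := by rw [sum_poly]; ring
  have s2 : ∑ i ∈ Finset.range k, ((k:ℚ)-1-(i:ℚ)) = (k:ℚ)*((k:ℚ)-1)/2 := by
    calc ∑ i ∈ Finset.range k, ((k:ℚ)-1-(i:ℚ))
        = ∑ i ∈ Finset.range k, (((k:ℚ)-1) + (-1)*(i:ℚ) + 0*(i:ℚ)^2) :=
          Finset.sum_congr rfl (fun i _ => by ring)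
      _ = _ := by rw [sum_poly]; ring
  have s3 : ∑ i ∈ Finset.range k, ((d:ℚ)-1) = (k:ℚ)*((d:ℚ)-1) := by
    calc ∑ i ∈ Finset.range k, ((d:ℚ)-1)
        = ∑ i ∈ Finset.range k, (((d:ℚ)-1) + 0*(i:ℚ) + 0*(i:ℚ)^2) :=
          Finset.sum_congr rfl (fun i _ => by ring)
      _ = _ := by rw [sum_poly]; ring
  rw [s1, s2, s3]
  have e : ((k:ℚ)*((k:ℚ)-1)/2) • a + ((k:ℚ)*((k:ℚ)-1)/2) • b
      = ((k:ℚ)*((k:ℚ)-1)/2) • (a+b) := (smul_add _ a b).symm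
  rw [e, hab, show -(3*h) = (-3:ℚ)•h by rw [neg_smul, qsmul_eq, map_ofNat]]
  module

lemma rootSqSumEk_eq (a b h : R) (k d : ℕ) (hab : a + b = -(3*h)) (hab2 : a * b = 3*h^2) :
    rootSqSumEk a b h k d
      = (((d:ℚ)-1)*(k:ℚ)*((k:ℚ)-1) - (k:ℚ)*((k:ℚ)-1)*(2*(k:ℚ)-1)/2) • (a*h)
        + (((d:ℚ)-1)*(k:ℚ)*((k:ℚ)-1) - (k:ℚ)*((k:ℚ)-1)*(2*(k:ℚ)-1)/2) • (b*h)
        + ((k:ℚ)*((d:ℚ)-1)^2 + 3*(k:ℚ)*((k:ℚ)-1)^2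
            - 2*(k:ℚ)*((k:ℚ)-1)*(2*(k:ℚ)-1)) • (h^2) := by
  unfold rootSqSumEk
  rw [Finset.sum_congr rfl (fun i hi => by
    rw [term_cast a b h k d i (Finset.mem_range.mp hi), sq_term _ _ _ a b h hab hab2])]
  simp only [Finset.sum_add_distrib, ← Finset.sum_smul]
  have t1 : ∑ i ∈ Finset.range k, (2*(i:ℚ)*((d:ℚ)-1) - 3*(i:ℚ)^2)
      = ((d:ℚ)-1)*(k:ℚ)*((k:ℚ)-1) - (k:ℚ)*((k:ℚ)-1)*(2*(k:ℚ)-1)/2 := by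
    calc ∑ i ∈ Finset.range k, (2*(i:ℚ)*((d:ℚ)-1) - 3*(i:ℚ)^2)
        = ∑ i ∈ Finset.range k, ((0:ℚ) + (2*((d:ℚ)-1))*(i:ℚ) + (-3)*(i:ℚ)^2) :=
          Finset.sum_congr rfl (fun i _ => by ring)
      _ = _ := by rw [sum_poly]; ring
  have t2 : ∑ i ∈ Finset.range k, (2*((k:ℚ)-1-(i:ℚ))*((d:ℚ)-1) - 3*((k:ℚ)-1-(i:ℚ))^2)
      = ((d:ℚ)-1)*(k:ℚ)*((k:ℚ)-1) - (k:ℚ)*((k:ℚ)-1)*(2*(k:ℚ)-1)/2 := by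
    calc ∑ i ∈ Finset.range k, (2*((k:ℚ)-1-(i:ℚ))*((d:ℚ)-1) - 3*((k:ℚ)-1-(i:ℚ))^2)
        = ∑ i ∈ Finset.range k,
            ((2*((k:ℚ)-1)*((d:ℚ)-1) - 3*((k:ℚ)-1)^2)
              + (-2*((d:ℚ)-1) + 6*((k:ℚ)-1))*(i:ℚ) + (-3)*(i:ℚ)^2) :=
          Finset.sum_congr rfl (fun i _ => by ring)
      _ = _ := by rw [sum_poly]; ring
  have t3 : ∑ i ∈ Finset.range k,
        (((d:ℚ)-1)^2 + 6*(i:ℚ)*((k:ℚ)-1-(i:ℚ)) - 3*(i:ℚ)^2 - 3*((k:ℚ)-1-(i:ℚ))^2)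
      = (k:ℚ)*((d:ℚ)-1)^2 + 3*(k:ℚ)*((k:ℚ)-1)^2 - 2*(k:ℚ)*((k:ℚ)-1)*(2*(k:ℚ)-1) := by
    calc ∑ i ∈ Finset.range k,
          (((d:ℚ)-1)^2 + 6*(i:ℚ)*((k:ℚ)-1-(i:ℚ)) - 3*(i:ℚ)^2 - 3*((k:ℚ)-1-(i:ℚ))^2)
        = ∑ i ∈ Finset.range k,
            ((((d:ℚ)-1)^2 - 3*((k:ℚ)-1)^2) + (12*((k:ℚ)-1))*(i:ℚ) + (-12)*(i:ℚ)^2) :=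
          Finset.sum_congr rfl (fun i _ => by ring)
      _ = _ := by rw [sum_poly]; ring
  rw [t1, t2, t3]

end Aux

/-- The coefficient `w` of the class of the Veronese locus `V_k`:
`(k−1)³·s₂(E) − (k−1)·s₂(E_k) − v·h·s₁(E_k)
  = (1/8)(k−2)(k−1)²(9k² − 47k + 12kd − 60d + 72 + 12d²)·h²`,
where `v = −(1/2)(k−1)(k−2)(3k+2d−5)`. -/
theorem veronese_coefficient_w {R : Type*} [CommRing R] [Algebra ℚ R] (a b h : R)
    (hab : a + b = -(3 * h)) (hab2 : a * b = 3 * h ^ 2)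
    (k d : ℕ) (hk : 2 ≤ k) :
    (((k : ℚ) - 1) ^ 3) • segre2E a b h d - ((k : ℚ) - 1) • segre2Ek a b h k d
        - (-(1 / 2 : ℚ) * ((k : ℚ) - 1) * ((k : ℚ) - 2)
            * (3 * (k : ℚ) + 2 * (d : ℚ) - 5)) • (h * segre1Ek a b h k d) =
      ((1 / 8 : ℚ) * ((k : ℚ) - 2) * ((k : ℚ) - 1) ^ 2
        * (9 * (k : ℚ) ^ 2 - 47 * (k : ℚ) + 12 * (k : ℚ) * (d : ℚ)
            - 60 * (d : ℚ) + 72 + 12 * (d : ℚ) ^ 2)) • h ^ 2 := by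
  unfold segre2E segre2Ek segre1Ek
  rw [rootSumE_eq a b h d hab, rootSqSumE_eq a b h d hab hab2,
      rootSumEk_eq a b h k d hab, rootSqSumEk_eq a b h k d hab hab2,
      habh_aux a b h hab]
  simp only [smul_pow, mul_neg, mul_smul_comm, ← pow_two]
  module
end

section
/- Let R be a commutative ℚ-algebra and a, b, h ∈ R with a + b = −3h and a·b = 3h². For all integers k ≥ 2 and d ≥ 0, let (r_s) be the combined family of the k(k+1) Chern roots of P^{k−1}(Ω¹(d+2)) and the k+2 Chern roots of Sym^{k+1}Ω¹ ⊗ O(d+2), and set v = −(1/2)(k−1)(k−2)(3k + 2d − 5) and w = (1/8)(k−2)(k−1)²(9k² − 47k + 12kd − 60d + 72 + 12d²). Then (k−1)·e₂(r) + v·h·e₁(r) + w·h² = (1/2)(k−1)·[ (1/4)(4k⁶ + 20k⁵ − 15k⁴ − 66k³ + 211k² − 218k + 112) − (2k⁵ + 7k⁴ + 2k³ + 24k² − 49k + 44)d + (k⁴ + 2k³ + 10k² + k + 16)d² ]·h². (This is the degree of the locus C_k ⊂ P^N of degree-d foliations with a dicritical singularity of order k having the maximal contact property, i.e., such that some leaf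 of the blown-up foliation has contact of order k with the exceptional line; C_k has codimension k² + 3k − 2 in P^N.) -/
private lemma sum_lin {R : Type*} [CommRing R] (n : ℕ) (c0 c1 : R) :
    2 * ∑ i ∈ Finset.range n, (c0 + c1 * (i:R)) =
      2 * (n:R) * c0 + ((n:R)^2 - (n:R)) * c1 := by
  induction n with
  | zero => simp
  | succ n ih => rw [Finset.sum_range_succ, mul_add, ih]; push_cast; ring

private lemma sum_quad {R : Type*} [CommRing R] (n : ℕ) (c0 c1 c2 : R) :
    6 * ∑ i ∈ Finset.range n, (c0 + c1 * (i:R) + c2 * (i:R)^2) =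
      6 * (n:R) * c0 + 3 * ((n:R)^2 - (n:R)) * c1
        + (2*(n:R)^3 - 3*(n:R)^2 + (n:R)) * c2 := by
  induction n with
  | zero => simp
  | succ n ih => rw [Finset.sum_range_succ, mul_add, ih]; push_cast; ring

private lemma sum_quart {R : Type*} [CommRing R] (n : ℕ) (c0 c1 c2 c3 c4 : R) :
    60 * ∑ i ∈ Finset.range n,
        (c0 + c1 * (i:R) + c2 * (i:R)^2 + c3 * (i:R)^3 + c4 * (i:R)^4) =
      60 * (n:R) * c0 + 30 * ((n:R)^2 - (n:R)) * c1
        + 10 * (2*(n:R)^3 - 3*(n:R)^2 + (n:R)) * c2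
        + 15 * ((n:R)^4 - 2*(n:R)^3 + (n:R)^2) * c3
        + 2 * (6*(n:R)^5 - 15*(n:R)^4 + 10*(n:R)^3 - (n:R)) * c4 := by
  induction n with
  | zero => simp
  | succ n ih => rw [Finset.sum_range_succ, mul_add, ih]; push_cast; ring

/-- `e₁` of the combined family of Chern roots of `P^{k−1}(Ω¹(d+2))` and
`Sym^{k+1}Ω¹ ⊗ O(d+2)` (the Chern roots of the bundle `D_k`). -/
def dkE1 {R : Type*} [CommRing R] (a b h : R) (k d : ℕ) : R :=
  jetRootSum a b h k d + symRootSum a b h k d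

/-- `e₂ = (1/2)((Σ r)² − Σ r²)` of the combined family of Chern roots of
`P^{k−1}(Ω¹(d+2))` and `Sym^{k+1}Ω¹ ⊗ O(d+2)`. -/
def dkE2 {R : Type*} [CommRing R] [Algebra ℚ R] (a b h : R) (k d : ℕ) : R :=
  ((1 : ℚ) / 2) • (dkE1 a b h k d ^ 2
    - (jetRootSqSum a b h k d + symRootSqSum a b h k d))


private lemma jet_clear {R : Type*} [CommRing R] (a b h : R) (k d : ℕ) :
    (12:R) * jetRootSum a b h k d = (4 : R) * a * (k:R)^3 + (6 : R) * a * (k:R)^2 + (2 : R) * a * (k:R) + (4 : R) * b * (k:R)^3 + (6 : R) * b * (k:R)^2 + (2 : R) * b * (k:R) + (12 : R) * h * (k:R)^2 * (d:R) + (24 : R) * h * (k:R)^2 + (12 : R) * h * (k:R) * (d:R) + (24 : R) * h * (k:R) := by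
  have h1 : ∀ j ∈ Finset.range k, (2:R) * ∑ i ∈ Finset.range (j + 1),
      ((i • a + (j - i) • b + a + (d + 2) • h) + (i • a + (j - i) • b + b + (d + 2) • h))
      = ((2 : R) * a + (2 : R) * b + (4 : R) * h * (d:R) + (8 : R) * h) + ((4 : R) * a + (4 : R) * b + (4 : R) * h * (d:R) + (8 : R) * h) * (j:R) + ((2 : R) * a + (2 : R) * b) * (j:R)^2 := by
    intro j hj
    have h2 : ∀ i ∈ Finset.range (j + 1),
        ((i • a + (j - i) • b + a + (d + 2) • h) + (i • a + (j - i) • b + b + (d + 2) • h))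
        = ((1 : R) * a + (2 : R) * b * (j:R) + (1 : R) * b + (2 : R) * h * (d:R) + (4 : R) * h) + ((2 : R) * a + (-2 : R) * b) * (i:R) := by
      intro i hi
      rw [Finset.mem_range] at hi
      have hi' : i ≤ j := by omega
      simp only [nsmul_eq_mul]
      rw [Nat.cast_sub hi']
      push_cast
      ring
    rw [Finset.sum_congr rfl h2, sum_lin]
    push_cast
    ring
  calc (12:R) * jetRootSum a b h k d
      = 6 * ((2:R) * jetRootSum a b h k d) := by ring
    _ = 6 * ∑ j ∈ Finset.range k, ((2:R) * ∑ i ∈ Finset.range (j + 1),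
          ((i • a + (j - i) • b + a + (d + 2) • h) + (i • a + (j - i) • b + b + (d + 2) • h))) := by
        simp only [jetRootSum]
        rw [Finset.mul_sum]
    _ = 6 * ∑ j ∈ Finset.range k, (((2 : R) * a + (2 : R) * b + (4 : R) * h * (d:R) + (8 : R) * h) + ((4 : R) * a + (4 : R) * b + (4 : R) * h * (d:R) + (8 : R) * h) * (j:R) + ((2 : R) * a + (2 : R) * b) * (j:R)^2) := by
        rw [Finset.sum_congr rfl h1]
    _ = (4 : R) * a * (k:R)^3 + (6 : R) * a * (k:R)^2 + (2 : R) * a * (k:R) + (4 : R) * b * (k:R)^3 + (6 : R) * b * (k:R)^2 + (2 : R) * b * (k:R) + (12 : R) * h * (k:R)^2 * (d:R) + (24 : R) * h * (k:R)^2 + (12 : R) * h * (k:R) * (d:R) + (24 : R) * h * (k:R) := by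
        rw [sum_quad]
        push_cast
        ring

private lemma jetsq_clear {R : Type*} [CommRing R] (a b h : R) (k d : ℕ) :
    (360:R) * jetRootSqSum a b h k d = (60 : R) * a^2 * (k:R)^4 + (120 : R) * a^2 * (k:R)^3 + (120 : R) * a^2 * (k:R)^2 + (60 : R) * a^2 * (k:R) + (60 : R) * a * b * (k:R)^4 + (120 : R) * a * b * (k:R)^3 + (-60 : R) * a * b * (k:R)^2 + (-120 : R) * a * b * (k:R) + (240 : R) * a * h * (k:R)^3 * (d:R) + (480 : R) * a * h * (k:R)^3 + (360 : R) * a * h * (k:R)^2 * (d:R) + (720 : R) * a * h * (k:R)^2 + (120 : R) * a * h * (k:R) * (d:R) + (240 : R) * a * h * (k:R) + (60 : R) * b^2 * (k:R)^4 + (120 : R) * b^2 * (k:R)^3 + (120 : R) * b^2 * (k:R)^2 + (60 : R) * b^2 * (k:R) + (240 : R) * b * h * (k:R)^3 * (d:R) + (480 : R) * b * h * (k:R)^3 + (360 : R) * b * h * (k:R)^2 * (d:R) + (720 : R) * b * h * (k:R)^2 + (120 : R) * b * h * (k:R) * (d:R) + (240 : R) * b * h * (k:R) + (360 : R) * h^2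 * (k:R)^2 * (d:R)^2 + (1440 : R) * h^2 * (k:R)^2 * (d:R) + (1440 : R) * h^2 * (k:R)^2 + (360 : R) * h^2 * (k:R) * (d:R)^2 + (1440 : R) * h^2 * (k:R) * (d:R) + (1440 : R) * h^2 * (k:R) := by
  have h1 : ∀ j ∈ Finset.range k, (6:R) * ∑ i ∈ Finset.range (j + 1),
      ((i • a + (j - i) • b + a + (d + 2) • h) ^ 2
      + (i • a + (j - i) • b + b + (d + 2) • h) ^ 2)
      = ((6 : R) * a^2 + (12 : R) * a * h * (d:R) + (24 : R) * a * h + (6 : R) * b^2 + (12 : R) * b * h * (d:R) + (24 : R) * b * h + (12 : R) * h^2 * (d:R)^2 + (48 : R) * h^2 * (d:R) + (48 : R) * h^2) + ((14 : R) * a^2 + (8 : R) * a * b + (24 : R) * a * h * (d:R) + (48 : R) * a * h + (14 : R) * b^2 + (24 : R) * b * h * (d:R) + (48 : R) * b * h + (12 : R) * h^2 * (d:R)^2 + (48 : R) * h^2 * (d:R) + (48 : R) * h^2) * (j:R) + ((12 : R) * a^2 + (12 : R) * a * b + (12 : R) * a * h * (d:R) + (24 : R) * a * h + (12 : R) * b^2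 + (12 : R) * b * h * (d:R) + (24 : R) * b * h) * (j:R)^2 + ((4 : R) * a^2 + (4 : R) * a * b + (4 : R) * b^2) * (j:R)^3 + ((0 : R)) * (j:R)^4 := by
    intro j hj
    have h2 : ∀ i ∈ Finset.range (j + 1),
        ((i • a + (j - i) • b + a + (d + 2) • h) ^ 2
      + (i • a + (j - i) • b + b + (d + 2) • h) ^ 2)
        = ((1 : R) * a^2 + (2 : R) * a * b * (j:R) + (2 : R) * a * h * (d:R) + (4 : R) * a * h + (2 : R) * b^2 * (j:R)^2 + (2 : R) * b^2 * (j:R) + (1 : R) * b^2 + (4 : R) * b * h * (d:R) * (j:R) + (2 : R) * b * h * (d:R) + (8 : R) * b * h * (j:R) + (4 : R) * b * h + (2 : R) * h^2 * (d:R)^2 + (8 : R) * h^2 * (d:R) + (8 : R) * h^2) + ((2 : R) * a^2 + (4 : R) * a * b * (j:R) + (4 : R) * a * h * (d:R) + (8 : R) * a * h + (-4 : R) * b^2 * (j:R) + (-2 : R) * b^2 + (-4 : R) * b * h * (d:R) + (-8 : R) * b * h) * (i:R) + ((2 : R) * a^2 + (-4 : R) * a * b + (2 : R) * b^2) * (i:R)^2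 := by
      intro i hi
      rw [Finset.mem_range] at hi
      have hi' : i ≤ j := by omega
      simp only [nsmul_eq_mul]
      rw [Nat.cast_sub hi']
      push_cast
      ring
    rw [Finset.sum_congr rfl h2, sum_quad]
    push_cast
    ring
  calc (360:R) * jetRootSqSum a b h k d
      = 60 * ((6:R) * jetRootSqSum a b h k d) := by ring
    _ = 60 * ∑ j ∈ Finset.range k, ((6:R) * ∑ i ∈ Finset.range (j + 1),
          ((i • a + (j - i) • b + a + (d + 2) • h) ^ 2
      + (i • a + (j - i) • b + b + (d + 2) • h) ^ 2)) := by
        simp only [jetRootSqSum]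
        rw [Finset.mul_sum]
    _ = 60 * ∑ j ∈ Finset.range k, (((6 : R) * a^2 + (12 : R) * a * h * (d:R) + (24 : R) * a * h + (6 : R) * b^2 + (12 : R) * b * h * (d:R) + (24 : R) * b * h + (12 : R) * h^2 * (d:R)^2 + (48 : R) * h^2 * (d:R) + (48 : R) * h^2) + ((14 : R) * a^2 + (8 : R) * a * b + (24 : R) * a * h * (d:R) + (48 : R) * a * h + (14 : R) * b^2 + (24 : R) * b * h * (d:R) + (48 : R) * b * h + (12 : R) * h^2 * (d:R)^2 + (48 : R) * h^2 * (d:R) + (48 : R) * h^2) * (j:R) + ((12 : R) * a^2 + (12 : R) * a * b + (12 : R) * a * h * (d:R) + (24 : R) * a * h + (12 : R) * b^2 + (12 : R) * b * h * (d:R) + (24 : R) * b * h) * (j:R)^2 + ((4 : R) * a^2 + (4 : R) * a * b + (4 : R) * b^2) * (j:R)^3 + ((0 : R)) * (j:R)^4) := by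
        rw [Finset.sum_congr rfl h1]
    _ = (60 : R) * a^2 * (k:R)^4 + (120 : R) * a^2 * (k:R)^3 + (120 : R) * a^2 * (k:R)^2 + (60 : R) * a^2 * (k:R) + (60 : R) * a * b * (k:R)^4 + (120 : R) * a * b * (k:R)^3 + (-60 : R) * a * b * (k:R)^2 + (-120 : R) * a * b * (k:R) + (240 : R) * a * h * (k:R)^3 * (d:R) + (480 : R) * a * h * (k:R)^3 + (360 : R) * a * h * (k:R)^2 * (d:R) + (720 : R) * a * h * (k:R)^2 + (120 : R) * a * h * (k:R) * (d:R) + (240 : R) * a * h * (k:R) + (60 : R) * b^2 * (k:R)^4 + (120 : R) * b^2 * (k:R)^3 + (120 : R) * b^2 * (k:R)^2 + (60 : R) * b^2 * (k:R) + (240 : R) * b * h * (k:R)^3 * (d:R) + (480 : R) * b * h * (k:R)^3 + (360 : R) * b * h * (k:R)^2 * (d:R) + (720 : R) * b * h * (k:R)^2 + (120 : R) * b * h * (k:R) * (d:R) + (240 : R) * b * h * (k:R) + (360 : R) * h^2 * (k:R)^2 * (d:R)^2 + (1440 : R) * h^2 * (k:R)^2 * (d:R) + (1440 : R) * h^2 *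 (k:R)^2 + (360 : R) * h^2 * (k:R) * (d:R)^2 + (1440 : R) * h^2 * (k:R) * (d:R) + (1440 : R) * h^2 * (k:R) := by
        rw [sum_quart]
        push_cast
        ring

private lemma sym_clear {R : Type*} [CommRing R] (a b h : R) (k d : ℕ) :
    (2:R) * symRootSum a b h k d = (1 : R) * a * (k:R)^2 + (3 : R) * a * (k:R) + (2 : R) * a + (1 : R) * b * (k:R)^2 + (3 : R) * b * (k:R) + (2 : R) * b + (2 : R) * h * (k:R) * (d:R) + (4 : R) * h * (k:R) + (4 : R) * h * (d:R) + (8 : R) * h := by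
  have h2 : ∀ i ∈ Finset.range (k + 2),
      (i • a + (k + 1 - i) • b + (d + 2) • h)
      = ((1 : R) * b * (k:R) + (1 : R) * b + (1 : R) * h * (d:R) + (2 : R) * h) + ((1 : R) * a + (-1 : R) * b) * (i:R) := by
    intro i hi
    rw [Finset.mem_range] at hi
    have hi' : i ≤ k + 1 := by omega
    simp only [nsmul_eq_mul]
    rw [Nat.cast_sub hi']
    push_cast
    ring
  simp only [symRootSum]
  rw [Finset.sum_congr rfl h2, sum_lin]
  push_cast
  ring

private lemma symsq_clear {R : Type*} [CommRing R] (a b h : R) (k d : ℕ) :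
    (6:R) * symRootSqSum a b h k d = (2 : R) * a^2 * (k:R)^3 + (9 : R) * a^2 * (k:R)^2 + (13 : R) * a^2 * (k:R) + (6 : R) * a^2 + (2 : R) * a * b * (k:R)^3 + (6 : R) * a * b * (k:R)^2 + (4 : R) * a * b * (k:R) + (6 : R) * a * h * (k:R)^2 * (d:R) + (12 : R) * a * h * (k:R)^2 + (18 : R) * a * h * (k:R) * (d:R) + (36 : R) * a * h * (k:R) + (12 : R) * a * h * (d:R) + (24 : R) * a * h + (2 : R) * b^2 * (k:R)^3 + (9 : R) * b^2 * (k:R)^2 + (13 : R) * b^2 * (k:R) + (6 : R) * b^2 + (6 : R) * b * h * (k:R)^2 * (d:R) + (12 : R) * b * h * (k:R)^2 + (18 : R) * b * h * (k:R) * (d:R) + (36 : R) * b * h * (k:R) + (12 : R) * b * h * (d:R) + (24 : R) * b * h + (6 : R) * h^2 * (k:R) * (d:R)^2 + (24 : R) * h^2 * (k:R) * (d:R) + (24 : R) * h^2 * (k:R) + (12 : R) * h^2 * (d:R)^2 + (48 : R) * h^2 * (d:R) + (48 : R) * h^2 := by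
  have h2 : ∀ i ∈ Finset.range (k + 2),
      (i • a + (k + 1 - i) • b + (d + 2) • h) ^ 2
      = ((1 : R) * b^2 * (k:R)^2 + (2 : R) * b^2 * (k:R) + (1 : R) * b^2 + (2 : R) * b * h * (k:R) * (d:R) + (4 : R) * b * h * (k:R) + (2 : R) * b * h * (d:R) + (4 : R) * b * h + (1 : R) * h^2 * (d:R)^2 + (4 : R) * h^2 * (d:R) + (4 : R) * h^2) + ((2 : R) * a * b * (k:R) + (2 : R) * a * b + (2 : R) * a * h * (d:R) + (4 : R) * a * h + (-2 : R) * b^2 * (k:R) + (-2 : R) * b^2 + (-2 : R) * b * h * (d:R) + (-4 : R) * b * h) * (i:R) + ((1 : R) * a^2 + (-2 : R) * a * b + (1 : R) * b^2) * (i:R)^2 := by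
    intro i hi
    rw [Finset.mem_range] at hi
    have hi' : i ≤ k + 1 := by omega
    simp only [nsmul_eq_mul]
    rw [Nat.cast_sub hi']
    push_cast
    ring
  simp only [symRootSqSum]
  rw [Finset.sum_congr rfl h2, sum_quad]
  push_cast
  ring

/-- The degree of the locus `C_k` of degree-`d` foliations with a dicritical
singularity of order `k` having the maximal contact property:
`(k−1)·e₂(r) + v·h·e₁(r) + w·h²` equals the stated polynomial in `k, d`
times `h²`, where `v = −(1/2)(k−1)(k−2)(3k+2d−5)` and
`w = (1/8)(k−2)(k−1)²(9k² − 47k + 12kd − 60d + 72 + 12d²)`. -/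
theorem degree_Ck {R : Type*} [CommRing R] [Algebra ℚ R] (a b h : R)
    (hab : a + b = -(3 * h)) (hab2 : a * b = 3 * h ^ 2)
    (k d : ℕ) (hk : 2 ≤ k) :
    ((k : ℚ) - 1) • dkE2 a b h k d
        + (-(1 / 2 : ℚ) * ((k : ℚ) - 1) * ((k : ℚ) - 2)
            * (3 * (k : ℚ) + 2 * (d : ℚ) - 5)) • (h * dkE1 a b h k d)
        + ((1 / 8 : ℚ) * ((k : ℚ) - 2) * ((k : ℚ) - 1) ^ 2
            * (9 * (k : ℚ) ^ 2 - 47 * (k : ℚ) + 12 * (k : ℚ) * (d : ℚ)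
                - 60 * (d : ℚ) + 72 + 12 * (d : ℚ) ^ 2)) • h ^ 2 =
      ((1 / 2 : ℚ) * ((k : ℚ) - 1) *
        ((1 / 4) * (4 * (k : ℚ) ^ 6 + 20 * (k : ℚ) ^ 5 - 15 * (k : ℚ) ^ 4
            - 66 * (k : ℚ) ^ 3 + 211 * (k : ℚ) ^ 2 - 218 * (k : ℚ) + 112)
          - (2 * (k : ℚ) ^ 5 + 7 * (k : ℚ) ^ 4 + 2 * (k : ℚ) ^ 3
              + 24 * (k : ℚ) ^ 2 - 49 * (k : ℚ) + 44) * (d : ℚ)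
          + ((k : ℚ) ^ 4 + 2 * (k : ℚ) ^ 3 + 10 * (k : ℚ) ^ 2
              + (k : ℚ) + 16) * (d : ℚ) ^ 2)) • h ^ 2 := by
  obtain ⟨u, hu, hc2, hc4, hc8⟩ : ∃ u : R, (360:R) * u = 1
      ∧ (algebraMap ℚ R) (1/2 : ℚ) = 180 * u
      ∧ (algebraMap ℚ R) (1/4 : ℚ) = 90 * u
      ∧ (algebraMap ℚ R) (1/8 : ℚ) = 45 * u := by
    refine ⟨algebraMap ℚ R (1/360 : ℚ), ?_, ?_, ?_, ?_⟩
    · rw [show ((360:R)) = algebraMap ℚ R ((360:ℚ)) from (map_ofNat _ _).symm, ← map_mul]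
      norm_num
    · rw [show ((180:R)) = algebraMap ℚ R ((180:ℚ)) from (map_ofNat _ _).symm, ← map_mul]
      norm_num
    · rw [show ((90:R)) = algebraMap ℚ R ((90:ℚ)) from (map_ofNat _ _).symm, ← map_mul]
      norm_num
    · rw [show ((45:R)) = algebraMap ℚ R ((45:ℚ)) from (map_ofNat _ _).symm, ← map_mul]
      norm_num
  have hjet : jetRootSum a b h k d = 30 * u * ((4 : R) * a * (k:R)^3 + (6 : R) * a * (k:R)^2 + (2 : R) * a * (k:R) + (4 : R) * b * (k:R)^3 + (6 : R) * b * (k:R)^2 + (2 : R) * b * (k:R) + (12 : R) * h * (k:R)^2 * (d:R) + (24 : R) * h * (k:R)^2 + (12 : R) * h * (k:R) * (d:R) + (24 : R) * h * (k:R)) := by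
    linear_combination 30 * u * jet_clear a b h k d - jetRootSum a b h k d * hu
  have hjetsq : jetRootSqSum a b h k d = u * ((60 : R) * a^2 * (k:R)^4 + (120 : R) * a^2 * (k:R)^3 + (120 : R) * a^2 * (k:R)^2 + (60 : R) * a^2 * (k:R) + (60 : R) * a * b * (k:R)^4 + (120 : R) * a * b * (k:R)^3 + (-60 : R) * a * b * (k:R)^2 + (-120 : R) * a * b * (k:R) + (240 : R) * a * h * (k:R)^3 * (d:R) + (480 : R) * a * h * (k:R)^3 + (360 : R) * a * h * (k:R)^2 * (d:R) + (720 : R) * a * h * (k:R)^2 + (120 : R) * a * h * (k:R) * (d:R) + (240 : R) * a * h * (k:R) + (60 : R) * b^2 * (k:R)^4 + (120 : R) * b^2 * (k:R)^3 + (120 : R) * b^2 * (k:R)^2 + (60 : R) * b^2 * (k:R) + (240 : R) * b * h * (k:R)^3 * (d:R) + (480 : R) * b * h * (k:R)^3 + (360 : R) * b * h * (k:R)^2 * (d:R) + (720 : R) * b * h * (k:R)^2 + (120 : R) * b * h * (k:R) * (d:R) + (240 : R) * b * h * (k:R) + (360 : R) * h^2 * (k:R)^2 * (d:R)^2 + (1440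 : R) * h^2 * (k:R)^2 * (d:R) + (1440 : R) * h^2 * (k:R)^2 + (360 : R) * h^2 * (k:R) * (d:R)^2 + (1440 : R) * h^2 * (k:R) * (d:R) + (1440 : R) * h^2 * (k:R)) := by
    linear_combination u * jetsq_clear a b h k d - jetRootSqSum a b h k d * hu
  have hsym : symRootSum a b h k d = 180 * u * ((1 : R) * a * (k:R)^2 + (3 : R) * a * (k:R) + (2 : R) * a + (1 : R) * b * (k:R)^2 + (3 : R) * b * (k:R) + (2 : R) * b + (2 : R) * h * (k:R) * (d:R) + (4 : R) * h * (k:R) + (4 : R) * h * (d:R) + (8 : R) * h) := by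
    linear_combination 180 * u * sym_clear a b h k d - symRootSum a b h k d * hu
  have hsymsq : symRootSqSum a b h k d = 60 * u * ((2 : R) * a^2 * (k:R)^3 + (9 : R) * a^2 * (k:R)^2 + (13 : R) * a^2 * (k:R) + (6 : R) * a^2 + (2 : R) * a * b * (k:R)^3 + (6 : R) * a * b * (k:R)^2 + (4 : R) * a * b * (k:R) + (6 : R) * a * h * (k:R)^2 * (d:R) + (12 : R) * a * h * (k:R)^2 + (18 : R) * a * h * (k:R) * (d:R) + (36 : R) * a * h * (k:R) + (12 : R) * a * h * (d:R) + (24 : R) * a * h + (2 : R) * b^2 * (k:R)^3 + (9 : R) * b^2 * (k:R)^2 + (13 : R) * b^2 * (k:R) + (6 : R) * b^2 + (6 : R) * b * h * (k:R)^2 * (d:R) + (12 : R) * b * h * (k:R)^2 + (18 : R) * b * h * (k:R) * (d:R) + (36 : R) * b * h * (k:R) + (12 : R) * b * h * (d:R) + (24 : R) * b * h + (6 : R) * h^2 * (k:R) * (d:R)^2 + (24 : R) * h^2 * (k:R) * (d:R) + (24 : R) * h^2 * (k:R) + (12 : R) * h^2 * (d:R)^2 + (48 : R) * h^2 * (d:R)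 + (48 : R) * h^2) := by
    linear_combination 60 * u * symsq_clear a b h k d - symRootSqSum a b h k d * hu
  simp only [dkE2, dkE1, Algebra.smul_def, map_mul, map_add, map_sub, map_neg,
    map_pow, map_natCast, map_one, map_ofNat]
  rw [hc2, hc4, hc8, hjet, hjetsq, hsym, hsymsq]
  linear_combination ((2592000 : R) * a * (k:R)^7 * u^3 + (12960000 : R) * a * (k:R)^6 * u^3 + (33696000 : R) * a * (k:R)^5 * u^3 + (-10800 : R) * a * (k:R)^5 * u^2 + (44064000 : R) * a * (k:R)^4 * u^3 + (-32400 : R) * a * (k:R)^4 * u^2 + (18144000 : R) * a * (k:R)^3 * u^3 + (-75600 : R) * a * (k:R)^3 * u^2 + (-33696000 : R) * a * (k:R)^2 * u^3 + (-32400 : R) * a * (k:R)^2 * u^2 + (-54432000 : R) * a * (k:R) * u^3 + (86400 : R) * a * (k:R) * u^2 + (-23328000 : R) * a * u^3 + (64800 : R) * a * u^2 + (2592000 : R) * b * (k:R)^7 * u^3 + (12960000 : R) * b * (k:R)^6 * u^3 + (33696000 : R) * b * (k:R)^5 * u^3 + (-10800 : R) * b * (k:R)^5 * u^2 + (44064000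 : R) * b * (k:R)^4 * u^3 + (-32400 : R) * b * (k:R)^4 * u^2 + (18144000 : R) * b * (k:R)^3 * u^3 + (-75600 : R) * b * (k:R)^3 * u^2 + (-33696000 : R) * b * (k:R)^2 * u^3 + (-32400 : R) * b * (k:R)^2 * u^2 + (-54432000 : R) * b * (k:R) * u^3 + (86400 : R) * b * (k:R) * u^2 + (-23328000 : R) * b * u^3 + (64800 : R) * b * u^2 + (-7776000 : R) * h * (k:R)^7 * u^3 + (15552000 : R) * h * (k:R)^6 * (d:R) * u^3 + (-7776000 : R) * h * (k:R)^6 * u^3 + (-64800 : R) * h * (k:R)^6 * u^2 + (62208000 : R) * h * (k:R)^5 * (d:R) * u^3 + (-43200 : R) * h * (k:R)^5 * (d:R) * u^2 + (23328000 : R) * h * (k:R)^5 * u^3 + (140400 : R) * h * (k:R)^5 * u^2 + (124416000 : R) * h * (k:R)^4 * (d:R) * u^3 + (-43200 : R) * h * (k:R)^4 * (d:R) * u^2 + (116640000 : R) * h * (k:R)^4 * u^3 + (140400 : R) * h * (k:R)^4 * u^2 + (93312000 : R) * h * (k:R)^3 * (d:R) * u^3 + (132192000 : R) * h * (k:R)^3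 * u^3 + (226800 : R) * h * (k:R)^3 * u^2 + (-46656000 : R) * h * (k:R)^2 * (d:R) * u^3 + (172800 : R) * h * (k:R)^2 * (d:R) * u^2 + (7776000 : R) * h * (k:R)^2 * u^3 + (-788400 : R) * h * (k:R)^2 * u^2 + (-155520000 : R) * h * (k:R) * (d:R) * u^3 + (43200 : R) * h * (k:R) * (d:R) * u^2 + (-147744000 : R) * h * (k:R) * u^3 + (-367200 : R) * h * (k:R) * u^2 + (-93312000 : R) * h * (d:R) * u^3 + (-129600 : R) * h * (d:R) * u^2 + (-116640000 : R) * h * u^3 + (712800 : R) * h * u^2) * hab + ((10800 : R) * (k:R)^5 * u^2 + (32400 : R) * (k:R)^4 * u^2 + (140400 : R) * (k:R)^3 * u^2 + (97200 : R) * (k:R)^2 * u^2 + (-151200 : R) * (k:R) * u^2 + (-129600 : R) * u^2) * hab2 + ((64800 : R) * h^2 * (k:R)^7 * u^2 + (-129600 : R) * h^2 * (k:R)^6 * (d:R) * u^2 + (-360 : R) * h^2 * (k:R)^6 * (d:R) * u + (64800 : R) * h^2 * (k:R)^6 * u^2 + (64800 : R) * h^2 * (k:R)^5 * (d:R)^2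 * u^2 + (180 : R) * h^2 * (k:R)^5 * (d:R)^2 * u + (-259200 : R) * h^2 * (k:R)^5 * (d:R) * u^2 + (-900 : R) * h^2 * (k:R)^5 * (d:R) * u + (64800 : R) * h^2 * (k:R)^5 * u^2 + (-405 : R) * h^2 * (k:R)^5 * u + (194400 : R) * h^2 * (k:R)^4 * (d:R)^2 * u^2 + (180 : R) * h^2 * (k:R)^4 * (d:R)^2 * u + (-259200 : R) * h^2 * (k:R)^4 * (d:R) * u^2 + (360 : R) * h^2 * (k:R)^4 * (d:R) * u + (-194400 : R) * h^2 * (k:R)^4 * u^2 + (3735 : R) * h^2 * (k:R)^4 * u + (259200 : R) * h^2 * (k:R)^3 * (d:R)^2 * u^2 + (900 : R) * h^2 * (k:R)^3 * (d:R)^2 * u + (259200 : R) * h^2 * (k:R)^3 * (d:R) * u^2 + (900 : R) * h^2 * (k:R)^3 * (d:R) * u + (-64800 : R) * h^2 * (k:R)^3 * u^2 + (-13725 : R) * h^2 * (k:R)^3 * u + (540 : R) * h^2 * (k:R)^2 * (d:R)^2 * u + (388800 : R) * h^2 * (k:R)^2 * (d:R) * u^2 + (-360 : R) * h^2 * (k:R)^2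 * (d:R) * u + (-64800 : R) * h^2 * (k:R)^2 * u^2 + (24345 : R) * h^2 * (k:R)^2 * u + (-259200 : R) * h^2 * (k:R) * (d:R)^2 * u^2 + (259200 : R) * h^2 * (k:R) * (d:R) * u^2 + (-2160 : R) * h^2 * (k:R) * (d:R) * u + (194400 : R) * h^2 * (k:R) * u^2 + (-20430 : R) * h^2 * (k:R) * u + (-259200 : R) * h^2 * (d:R)^2 * u^2 + (-1800 : R) * h^2 * (d:R)^2 * u + (-259200 : R) * h^2 * (d:R) * u^2 + (2520 : R) * h^2 * (d:R) * u + (-64800 : R) * h^2 * u^2 + (6480 : R) * h^2 * u) * hu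
end
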